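/- arXiv:2405.10238 — 4 statements merged into one kernel-verified Lean document; each statement's English description precedes it below -/
import Mathlib

section
/- There exists a universal constant c > 0 such that for every n ≥ 1, every Boolean function f : {0,1}ⁿ → {0,1}, and every integer d ≥ 2, one has 2^{−n}·∑_{x ∈ {0,1}ⁿ} √(sens_f(x)) ≥ c·√d·∑_{S ⊆ {1,…,n}, d ≤ |S| ≤ 2d} f̂(S)², where f̂(S) = 2^{−n}·∑_{x ∈ {0,1}ⁿ} f(x)·∏_{i ∈ S} (−1)^{x_i} and sens_f(x) = |{i : f(x ⊕ eᵢ) ≠ f(x)}|. -/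
set_option linter.unreachableTactic false
set_option linter.unusedTactic false
set_option linter.unnecessarySeqFocus false
set_option maxHeartbeats 1000000
open Finset

namespace Tal
variable {n : ℕ}


def flips (T : Finset (Fin n)) (x : Fin n → Bool) : Fin n → Bool :=
  fun i => if i ∈ T then !x i else x i

lemma flips_invol (T : Finset (Fin n)) (x : Fin n → Bool) : flips T (flips T x) = x := by
  funext i; by_cases h : i ∈ T <;> simp [flips, h]

lemma flips_empty (x : Fin n → Bool) : flips (∅ : Finset (Fin n)) x = x := by
  funext i; simp [flips]

lemma sum_flips (T : Finset (Fin n)) (h : (Fin n → Bool) → ℝ) :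
    ∑ x, h (flips T x) = ∑ x, h x := by
  exact Fintype.sum_bijective (flips T)
    (Function.Involutive.bijective (flips_invol T)) _ _ (fun x => rfl)

lemma flips_comm (T U : Finset (Fin n)) (x : Fin n → Bool) (hd : Disjoint T U) :
    flips T (flips U x) = flips U (flips T x) := by
  funext i
  by_cases hT : i ∈ T <;> by_cases hU : i ∈ U
  · exact absurd (Finset.mem_inter.2 ⟨hT, hU⟩) (by simp [Finset.disjoint_iff_inter_eq_empty.1 hd])
  all_goals simp [flips, hT, hU]

lemma flips_insert (j : Fin n) (T : Finset (Fin n)) (x : Fin n → Bool) (hj : j ∉ T) :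
    flips (insert j T) x = flips T (flips {j} x) := by
  funext i
  by_cases hij : i = j
  · subst hij; simp [flips, hj]
  · by_cases hT : i ∈ T <;> simp [flips, hT, hij]




def chi (S : Finset (Fin n)) (x : Fin n → Bool) : ℝ :=
  ∏ i ∈ S, (if x i then (-1 : ℝ) else 1)

lemma chi_flips (S T : Finset (Fin n)) (x : Fin n → Bool) :
    chi S (flips T x) = (-1) ^ (S ∩ T).card * chi S x := by
  classical
  unfold chi
  rw [← Finset.prod_const (b := (-1:ℝ)) (s := S ∩ T)]
  rw [← Finset.prod_inter_mul_prod_diff S T (fun i => (if x i then (-1:ℝ) else 1))]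
  rw [← Finset.prod_inter_mul_prod_diff S T (fun i => (if (flips T x) i then (-1:ℝ) else 1))]
  rw [← mul_assoc, ← Finset.prod_mul_distrib]
  congr 1
  · apply Finset.prod_congr rfl
    intro i hi
    have hT : i ∈ T := (Finset.mem_inter.1 hi).2
    rcases Bool.eq_false_or_eq_true (x i) with h | h <;> simp [flips, hT, h]
  · apply Finset.prod_congr rfl
    intro i hi
    have hT : i ∉ T := (Finset.mem_sdiff.1 hi).2
    simp [flips, hT]

-- sum over subsets of K of (-1)^{|S ∩ T|}
lemma sum_powerset_sign (K S : Finset (Fin n)) :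
    ∑ T ∈ K.powerset, ((-1 : ℝ)) ^ (S ∩ T).card
      = if S ∩ K = ∅ then (2:ℝ) ^ K.card else 0 := by
  classical
  induction K using Finset.induction_on with
  | empty => simp
  | @insert j K hj ih =>
    rw [Finset.sum_powerset_insert hj]
    have h2 : ∀ T ∈ K.powerset, ((-1:ℝ)) ^ (S ∩ insert j T).card
        = (if j ∈ S then (-1:ℝ) else 1) * (-1) ^ (S ∩ T).card := by
      intro T hT
      have hjT : j ∉ T := fun h => hj (Finset.mem_powerset.1 hT h)
      by_cases hjS : j ∈ S
      · have : S ∩ insert j T = insert j (S ∩ T) := by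
          ext a; by_cases haj : a = j <;> simp [haj, hjS] <;> tauto
        rw [this, Finset.card_insert_of_notMem (by simp [hjT])]
        simp [hjS, pow_succ, mul_comm]
      · have : S ∩ insert j T = S ∩ T := by
          ext a; by_cases haj : a = j <;> simp [haj, hjS] <;> tauto
        rw [this]; simp [hjS]
    rw [Finset.sum_congr rfl h2, ← Finset.mul_sum, ih]
    by_cases hjS : j ∈ S
    · have h1 : S ∩ insert j K ≠ ∅ := by
        intro h
        have : j ∈ S ∩ insert j K := Finset.mem_inter.2 ⟨hjS, Finset.mem_insert_self _ _⟩
        simp [h] at this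
      simp only [hjS, if_true, h1, if_false]
      by_cases hSK : S ∩ K = ∅ <;> simp [hSK] <;> ring
    · have h1 : S ∩ insert j K = S ∩ K := by
        ext a; by_cases haj : a = j <;> simp [haj, hjS] <;> tauto
      rw [h1]
      by_cases hSK : S ∩ K = ∅ <;> simp [hSK, hjS, Finset.card_insert_of_notMem hj, pow_succ] <;> ring




def sgn (b : Bool) : ℝ := if b then -1 else 1

lemma chi_kernel (x y : Fin n → Bool) :
    ∑ S : Finset (Fin n), chi S x * chi S y = if x = y then (2:ℝ)^n else 0 := by
  classical
  have h1 : ∀ S : Finset (Fin n), chi S x * chi S y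
      = (∏ i ∈ S, sgn (x i) * sgn (y i)) * ∏ i ∈ Finset.univ \ S, (1:ℝ) := by
    intro S
    rw [chi, chi, ← Finset.prod_mul_distrib, Finset.prod_const_one, mul_one]
    rfl
  rw [Fintype.sum_congr _ _ h1]
  rw [← Finset.powerset_univ, ← Finset.prod_add]
  by_cases hxy : x = y
  · subst hxy
    have : ∀ i ∈ (Finset.univ : Finset (Fin n)), sgn (x i) * sgn (x i) + 1 = 2 := by
      intro i _; rcases Bool.eq_false_or_eq_true (x i) with h | h <;> simp [sgn, h] <;> norm_num
    rw [Finset.prod_congr rfl this, Finset.prod_const, if_pos rfl]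
    simp
  · obtain ⟨i0, hi0⟩ : ∃ i, x i ≠ y i := by
      by_contra h
      push_neg at h
      exact hxy (funext h)
    rw [if_neg hxy]
    apply Finset.prod_eq_zero (Finset.mem_univ i0)
    rcases Bool.eq_false_or_eq_true (x i0) with h | h <;>
      rcases Bool.eq_false_or_eq_true (y i0) with h' | h' <;>
      simp [sgn, h, h'] at hi0 ⊢ <;> norm_num

noncomputable def fhat (f : (Fin n → Bool) → ℝ) (S : Finset (Fin n)) : ℝ :=
  (∑ x, f x * chi S x) / 2^n

lemma inversion (f : (Fin n → Bool) → ℝ) (x : Fin n → Bool) :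
    ∑ S : Finset (Fin n), fhat f S * chi S x = f x := by
  classical
  have h2n : (0:ℝ) < 2^n := by positivity
  calc ∑ S : Finset (Fin n), fhat f S * chi S x
      = ∑ S : Finset (Fin n), ∑ y, f y * (chi S y * chi S x) / 2^n := by
        apply Finset.sum_congr rfl
        intro S _
        rw [fhat, div_mul_eq_mul_div, Finset.sum_mul, Finset.sum_div]
        apply Finset.sum_congr rfl
        intro y _
        ring
    _ = ∑ y, ∑ S : Finset (Fin n), f y * (chi S y * chi S x) / 2^n := Finset.sum_comm
    _ = ∑ y, f y * (∑ S : Finset (Fin n), chi S y * chi S x) / 2^n := by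
        apply Finset.sum_congr rfl
        intro y _
        rw [Finset.mul_sum, Finset.sum_div]
    _ = f x := by
        rw [Fintype.sum_congr _ _ (fun y => by rw [chi_kernel y x])]
        rw [Fintype.sum_eq_single x]
        · simp
        · intro y hy
          simp [hy]

lemma parseval (f g : (Fin n → Bool) → ℝ) :
    ∑ S : Finset (Fin n), fhat f S * fhat g S = (∑ x, f x * g x) / 2^n := by
  classical
  calc ∑ S : Finset (Fin n), fhat f S * fhat g S
      = ∑ S : Finset (Fin n), ∑ x, f x * chi S x * fhat g S / 2^n := by
        apply Finset.sum_congr rfl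
        intro S _
        rw [fhat, div_mul_eq_mul_div, Finset.sum_mul, Finset.sum_div]
    _ = ∑ x, ∑ S : Finset (Fin n), f x * chi S x * fhat g S / 2^n := Finset.sum_comm
    _ = ∑ x, f x * (∑ S : Finset (Fin n), fhat g S * chi S x) / 2^n := by
        apply Finset.sum_congr rfl
        intro x _
        rw [Finset.mul_sum, Finset.sum_div]
        apply Finset.sum_congr rfl
        intro S _
        ring
    _ = (∑ x, f x * g x) / 2^n := by
        rw [← Finset.sum_div]
        congr 1
        apply Finset.sum_congr rfl
        intro x _
        rw [inversion g x]


-- conditional averaging over coordinates in K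
noncomputable def EK (K : Finset (Fin n)) (f : (Fin n → Bool) → ℝ) (x : Fin n → Bool) : ℝ :=
  (∑ T ∈ K.powerset, f (flips T x)) / 2^K.card

lemma EK_empty (f : (Fin n → Bool) → ℝ) (x : Fin n → Bool) : EK ∅ f x = f x := by
  simp [EK, flips_empty]

lemma EK_mono {f g : (Fin n → Bool) → ℝ} (h : ∀ y, f y ≤ g y) (K : Finset (Fin n))
    (x : Fin n → Bool) : EK K f x ≤ EK K g x := by
  unfold EK
  gcongr with T hT
  exact h _

lemma sum_EK (K : Finset (Fin n)) (f : (Fin n → Bool) → ℝ) :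
    ∑ x, EK K f x = ∑ x, f x := by
  unfold EK
  rw [← Finset.sum_div, Finset.sum_comm]
  have h1 : ∀ T ∈ K.powerset, ∑ x, f (flips T x) = ∑ x, f x :=
    fun T _ => sum_flips T f
  rw [Finset.sum_congr rfl h1, Finset.sum_const, Finset.card_powerset]
  simp [mul_comm, mul_div_assoc]

lemma EK_hat (K : Finset (Fin n)) (f : (Fin n → Bool) → ℝ) (S : Finset (Fin n)) :
    fhat (EK K f) S = if S ∩ K = ∅ then fhat f S else 0 := by
  classical
  unfold fhat EK
  have h1 : ∀ x, (∑ T ∈ K.powerset, f (flips T x)) / 2^K.card * chi S x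
      = ∑ T ∈ K.powerset, f (flips T x) * chi S x / 2^K.card := by
    intro x
    rw [div_mul_eq_mul_div, Finset.sum_mul, Finset.sum_div]
  rw [Fintype.sum_congr _ _ h1, Finset.sum_comm]
  have h2 : ∀ T ∈ K.powerset, ∑ x, f (flips T x) * chi S x / 2^K.card
      = (-1:ℝ)^(S ∩ T).card * ∑ x, f x * chi S x / 2^K.card := by
    intro T _
    rw [Finset.mul_sum]
    rw [← sum_flips T (fun y => f (flips T y) * chi S y / 2^K.card)]
    apply Finset.sum_congr rfl
    intro x _
    rw [flips_invol, chi_flips]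
    ring
  rw [Finset.sum_congr rfl h2, ← Finset.sum_mul, sum_powerset_sign]
  by_cases hSK : S ∩ K = ∅
  · rw [if_pos hSK, if_pos hSK, ← Finset.sum_div]
    field_simp
  · rw [if_neg hSK, if_neg hSK, zero_mul, zero_div]

lemma sum_sq_EK (K : Finset (Fin n)) (f : (Fin n → Bool) → ℝ) :
    (∑ x, EK K f x * EK K f x) / 2^n
      = ∑ S ∈ Finset.univ.filter (fun S : Finset (Fin n) => S ∩ K = ∅), fhat f S * fhat f S := by
  classical
  rw [← parseval]
  rw [← Finset.sum_filter_add_sum_filter_not Finset.univ (fun S : Finset (Fin n) => S ∩ K = ∅)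
    (fun S => fhat (EK K f) S * fhat (EK K f) S)]
  have h1 : ∀ S ∈ Finset.univ.filter (fun S : Finset (Fin n) => S ∩ K = ∅),
      fhat (EK K f) S * fhat (EK K f) S = fhat f S * fhat f S := by
    intro S hS
    rw [EK_hat, if_pos (Finset.mem_filter.1 hS).2]
  have h2 : ∀ S ∈ Finset.univ.filter (fun S : Finset (Fin n) => ¬ S ∩ K = ∅),
      fhat (EK K f) S * fhat (EK K f) S = 0 := by
    intro S hS
    rw [EK_hat, if_neg (Finset.mem_filter.1 hS).2, mul_zero]
  rw [Finset.sum_congr rfl h1, Finset.sum_congr rfl h2, Finset.sum_const_zero, add_zero]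

noncomputable def grad2 (K : Finset (Fin n)) (f : (Fin n → Bool) → ℝ) (x : Fin n → Bool) : ℝ :=
  ∑ i ∈ K, ((f x - f (flips {i} x))/2)^2

lemma grad2_nonneg (K : Finset (Fin n)) (f : (Fin n → Bool) → ℝ) (x : Fin n → Bool) :
    0 ≤ grad2 K f x :=
  Finset.sum_nonneg (fun i _ => sq_nonneg _)

lemma sqrt_tp_aux {x δ : ℝ} (hx0 : 0 ≤ x) (hx : x ≤ 1/4) (hδ : δ^2 ≤ 1/4) :
    x + δ^2 ≤ Real.sqrt (x^2 + δ^2) := by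
  rw [show x^2 + δ^2 = (x + δ^2)^2 + δ^2*(1 - 2*x - δ^2) by ring]
  have h1 : 0 ≤ δ^2*(1 - 2*x - δ^2) := by nlinarith [sq_nonneg δ]
  calc x + δ^2 = Real.sqrt ((x + δ^2)^2) := (Real.sqrt_sq (by positivity)).symm
    _ ≤ _ := Real.sqrt_le_sqrt (by linarith)

lemma tp {a b : ℝ} (ha0 : 0 ≤ a) (ha1 : a ≤ 1) (hb0 : 0 ≤ b) (hb1 : b ≤ 1) :
    2 * ((a+b)/2 - ((a+b)/2)^2)
      ≤ Real.sqrt ((a - a^2)^2 + ((a-b)/2)^2) + Real.sqrt ((b - b^2)^2 + ((a-b)/2)^2) := by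
  have hd : ((a-b)/2)^2 ≤ 1/4 := by
    nlinarith [mul_nonneg ha0 hb0, mul_nonneg (sub_nonneg.2 ha1) (sub_nonneg.2 hb1)]
  have h1 := sqrt_tp_aux (x := a - a^2) (δ := (a-b)/2) (by nlinarith)
    (by nlinarith [sq_nonneg (2*a-1)]) hd
  have h2 := sqrt_tp_aux (x := b - b^2) (δ := (a-b)/2) (by nlinarith)
    (by nlinarith [sq_nonneg (2*b-1)]) hd
  nlinarith [h1, h2]

lemma cs_le_mul_sqrt (s : Finset (Fin n)) (c d : Fin n → ℝ) :
    ∑ i ∈ s, c i * d i ≤ Real.sqrt (∑ i ∈ s, (c i)^2) * Real.sqrt (∑ i ∈ s, (d i)^2) := by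
  have hcs := Finset.sum_mul_sq_le_sq_mul_sq s c d
  have hA : Real.sqrt (∑ i ∈ s, (c i)^2) ^ 2 = ∑ i ∈ s, (c i)^2 :=
    Real.sq_sqrt (Finset.sum_nonneg (fun i _ => sq_nonneg _))
  have hB : Real.sqrt (∑ i ∈ s, (d i)^2) ^ 2 = ∑ i ∈ s, (d i)^2 :=
    Real.sq_sqrt (Finset.sum_nonneg (fun i _ => sq_nonneg _))
  have hA0 : 0 ≤ Real.sqrt (∑ i ∈ s, (c i)^2) := Real.sqrt_nonneg _
  have hB0 : 0 ≤ Real.sqrt (∑ i ∈ s, (d i)^2) := Real.sqrt_nonneg _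
  nlinarith [hcs, mul_nonneg hA0 hB0]

lemma minkowski_sum (s : Finset (Fin n)) (c d : Fin n → ℝ) :
    Real.sqrt (∑ i ∈ s, ((c i + d i)/2)^2)
      ≤ (Real.sqrt (∑ i ∈ s, (c i)^2) + Real.sqrt (∑ i ∈ s, (d i)^2))/2 := by
  have hA : Real.sqrt (∑ i ∈ s, (c i)^2) ^ 2 = ∑ i ∈ s, (c i)^2 :=
    Real.sq_sqrt (Finset.sum_nonneg (fun i _ => sq_nonneg _))
  have hB : Real.sqrt (∑ i ∈ s, (d i)^2) ^ 2 = ∑ i ∈ s, (d i)^2 :=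
    Real.sq_sqrt (Finset.sum_nonneg (fun i _ => sq_nonneg _))
  have hA0 : 0 ≤ Real.sqrt (∑ i ∈ s, (c i)^2) := Real.sqrt_nonneg _
  have hB0 : 0 ≤ Real.sqrt (∑ i ∈ s, (d i)^2) := Real.sqrt_nonneg _
  have hcs := cs_le_mul_sqrt s c d
  have key : ∑ i ∈ s, ((c i + d i)/2)^2
      ≤ ((Real.sqrt (∑ i ∈ s, (c i)^2) + Real.sqrt (∑ i ∈ s, (d i)^2))/2)^2 := by
    have expand : ∑ i ∈ s, ((c i + d i)/2)^2
        = (∑ i ∈ s, (c i)^2 + 2 * ∑ i ∈ s, c i * d i + ∑ i ∈ s, (d i)^2)/4 := by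
      have hterm : ∀ i ∈ s, ((c i + d i)/2)^2 = ((c i)^2 + 2*(c i * d i) + (d i)^2)/4 := by
        intro i _; ring
      rw [Finset.sum_congr rfl hterm, ← Finset.sum_div, Finset.sum_add_distrib,
        Finset.sum_add_distrib, ← Finset.mul_sum]
    rw [expand]
    nlinarith [hcs]
  calc Real.sqrt (∑ i ∈ s, ((c i + d i)/2)^2) ≤ Real.sqrt ((( Real.sqrt (∑ i ∈ s, (c i)^2) + Real.sqrt (∑ i ∈ s, (d i)^2))/2)^2) :=
        Real.sqrt_le_sqrt key
    _ = _ := Real.sqrt_sq (by positivity)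

lemma minkowski2 {p1 q1 p2 q2 : ℝ} (hp1 : 0 ≤ p1) (hq1 : 0 ≤ q1) (hp2 : 0 ≤ p2) (hq2 : 0 ≤ q2) :
    Real.sqrt (((p1+p2)/2)^2 + ((q1+q2)/2)^2)
      ≤ (Real.sqrt (p1^2+q1^2) + Real.sqrt (p2^2+q2^2))/2 := by
  have hA : Real.sqrt (p1^2+q1^2) ^ 2 = p1^2+q1^2 := Real.sq_sqrt (by positivity)
  have hB : Real.sqrt (p2^2+q2^2) ^ 2 = p2^2+q2^2 := Real.sq_sqrt (by positivity)
  have hA0 : 0 ≤ Real.sqrt (p1^2+q1^2) := Real.sqrt_nonneg _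
  have hB0 : 0 ≤ Real.sqrt (p2^2+q2^2) := Real.sqrt_nonneg _
  have hAB : p1*p2 + q1*q2 ≤ Real.sqrt (p1^2+q1^2) * Real.sqrt (p2^2+q2^2) := by
    nlinarith [sq_nonneg (p1*q2 - p2*q1), mul_nonneg hA0 hB0]
  have key : ((p1+p2)/2)^2 + ((q1+q2)/2)^2
      ≤ ((Real.sqrt (p1^2+q1^2) + Real.sqrt (p2^2+q2^2))/2)^2 := by
    nlinarith [hAB]
  calc Real.sqrt (((p1+p2)/2)^2 + ((q1+q2)/2)^2)
      ≤ Real.sqrt (((Real.sqrt (p1^2+q1^2) + Real.sqrt (p2^2+q2^2))/2)^2) := Real.sqrt_le_sqrt key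
    _ = _ := Real.sqrt_sq (by positivity)

lemma EK_insert (j : Fin n) (K : Finset (Fin n)) (hj : j ∉ K) (f : (Fin n → Bool) → ℝ)
    (x : Fin n → Bool) :
    EK (insert j K) f x = (EK K f x + EK K f (flips {j} x))/2 := by
  unfold EK
  rw [Finset.sum_powerset_insert hj]
  have h1 : ∀ T ∈ K.powerset, f (flips (insert j T) x) = f (flips T (flips {j} x)) := by
    intro T hT
    rw [flips_insert j T x (fun h => hj (Finset.mem_powerset.1 hT h))]
  have h2 : ∀ T ∈ K.powerset, f (flips T x) = f (flips T x) := fun _ _ => rfl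
  rw [Finset.sum_congr rfl h1]
  rw [Finset.card_insert_of_notMem hj, pow_succ]
  ring

lemma EK_avg (K : Finset (Fin n)) (f g : (Fin n → Bool) → ℝ) (x : Fin n → Bool) :
    EK K (fun y => (f y + g y)/2) x = (EK K f x + EK K g x)/2 := by
  unfold EK
  rw [← Finset.sum_div, Finset.sum_add_distrib]
  ring

lemma EK_comp_flip (j : Fin n) (K : Finset (Fin n)) (hj : j ∉ K) (f : (Fin n → Bool) → ℝ)
    (x : Fin n → Bool) :
    EK K (fun y => f (flips {j} y)) x = EK K f (flips {j} x) := by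
  unfold EK
  congr 1
  apply Finset.sum_congr rfl
  intro T hT
  have hd : Disjoint ({j} : Finset (Fin n)) T := by
    simp only [Finset.disjoint_singleton_left]
    exact fun h => hj (Finset.mem_powerset.1 hT h)
  show f (flips {j} (flips T x)) = f (flips T (flips {j} x))
  exact congrArg f (flips_comm {j} T x hd)

lemma EK_insert' (j : Fin n) (K : Finset (Fin n)) (hj : j ∉ K) (g : (Fin n → Bool) → ℝ)
    (x : Fin n → Bool) :
    EK (insert j K) g x = EK K (fun y => (g y + g (flips {j} y))/2) x := by
  rw [EK_insert j K hj g x, EK_avg K g (fun y => g (flips {j} y)) x,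
    EK_comp_flip j K hj g x]

lemma grad2_insert (j : Fin n) (K : Finset (Fin n)) (hj : j ∉ K) (f : (Fin n → Bool) → ℝ)
    (x : Fin n → Bool) :
    grad2 (insert j K) f x = ((f x - f (flips {j} x))/2)^2 + grad2 K f x := by
  unfold grad2
  rw [Finset.sum_insert hj]

theorem bobkov (K : Finset (Fin n)) (f : (Fin n → Bool) → ℝ)
    (hf : ∀ y, 0 ≤ f y ∧ f y ≤ 1) (x : Fin n → Bool) :
    EK K f x - (EK K f x)^2
      ≤ EK K (fun y => Real.sqrt ((f y - (f y)^2)^2 + grad2 K f y)) x := by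
  classical
  induction K using Finset.induction_on generalizing f x with
  | empty =>
    rw [EK_empty, EK_empty]
    have : grad2 (∅ : Finset (Fin n)) f x = 0 := by simp [grad2]
    rw [this, add_zero, Real.sqrt_sq (by nlinarith [(hf x).1, (hf x).2])]
  | @insert j K hj ih =>
    set u : (Fin n → Bool) → ℝ := fun y => (f y + f (flips {j} y))/2 with hu
    have hu01 : ∀ y, 0 ≤ u y ∧ u y ≤ 1 := by
      intro y
      constructor
      · have := (hf y).1; have := (hf (flips {j} y)).1
        simp only [hu]; linarith
      · have := (hf y).2; have := (hf (flips {j} y)).2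
        simp only [hu]; linarith
    -- identification of the average
    have havg : EK (insert j K) f x = EK K u x := by
      rw [EK_insert j K hj f x, hu]
      have := EK_avg K f (fun y => f (flips {j} y)) x
      rw [this, EK_comp_flip j K hj f x]
    -- pointwise inequality
    set R : (Fin n → Bool) → ℝ :=
      fun z => Real.sqrt ((f z - (f z)^2)^2 + grad2 (insert j K) f z) with hR
    have hpoint : ∀ y, Real.sqrt ((u y - (u y)^2)^2 + grad2 K u y)
        ≤ (R y + R (flips {j} y))/2 := by
      intro y
      set a := f y with hay
      set b := f (flips {j} y) with hby
      have hinv : flips {j} (flips {j} y) = y := flips_invol {j} y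
      have hga : grad2 (insert j K) f y = ((a - b)/2)^2 + grad2 K f y := grad2_insert j K hj f y
      have hgb : grad2 (insert j K) f (flips {j} y)
          = ((a - b)/2)^2 + grad2 K f (flips {j} y) := by
        rw [grad2_insert j K hj f (flips {j} y), hinv]
        congr 1
        rw [← hay, ← hby]
        ring
      -- gradient of u bounded via Minkowski
      have hgradu : Real.sqrt (grad2 K u y)
          ≤ (Real.sqrt (grad2 K f y) + Real.sqrt (grad2 K f (flips {j} y)))/2 := by
        have hcd : ∀ i ∈ K, ((u y - u (flips {i} y))/2)^2
            = (((f y - f (flips {i} y)) + (f (flips {j} y) - f (flips {i} (flips {j} y))))/2/2)^2 := by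
          intro i hi
          have hij : Disjoint ({j} : Finset (Fin n)) ({i} : Finset (Fin n)) := by
            simp only [Finset.disjoint_singleton_left, Finset.mem_singleton]
            exact fun h => hj (h ▸ hi)
          have : u (flips {i} y) = (f (flips {i} y) + f (flips {i} (flips {j} y)))/2 := by
            simp only [hu]
            rw [flips_comm _ _ _ hij]
          rw [this]
          simp only [hu]
          ring
        rw [show grad2 K u y = ∑ i ∈ K, (((f y - f (flips {i} y)) + (f (flips {j} y) - f (flips {i} (flips {j} y))))/2/2)^2 from Finset.sum_congr rfl hcd]
        have hms := minkowski_sum K (fun i => (f y - f (flips {i} y))/2)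
          (fun i => (f (flips {j} y) - f (flips {i} (flips {j} y)))/2)
        have hrw : ∀ i ∈ K, (((f y - f (flips {i} y)) + (f (flips {j} y) - f (flips {i} (flips {j} y))))/2/2)^2
            = (((f y - f (flips {i} y))/2 + (f (flips {j} y) - f (flips {i} (flips {j} y)))/2)/2)^2 := by
          intro i _; ring
        rw [Finset.sum_congr rfl hrw]
        exact hms
      -- two-point inequality
      have htp : u y - (u y)^2
          ≤ (Real.sqrt ((a - a^2)^2 + ((a-b)/2)^2) + Real.sqrt ((b - b^2)^2 + ((a-b)/2)^2))/2 := by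
        have := tp (a := a) (b := b) (hf y).1 (hf y).2 (hf (flips {j} y)).1 (hf (flips {j} y)).2
        have huy : u y = (a + b)/2 := rfl
        rw [huy]
        linarith
      -- combine
      set p1 := Real.sqrt ((a - a^2)^2 + ((a-b)/2)^2) with hp1
      set p2 := Real.sqrt ((b - b^2)^2 + ((a-b)/2)^2) with hp2
      set q1 := Real.sqrt (grad2 K f y) with hq1
      set q2 := Real.sqrt (grad2 K f (flips {j} y)) with hq2
      have hp10 : 0 ≤ p1 := Real.sqrt_nonneg _
      have hp20 : 0 ≤ p2 := Real.sqrt_nonneg _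
      have hq10 : 0 ≤ q1 := Real.sqrt_nonneg _
      have hq20 : 0 ≤ q2 := Real.sqrt_nonneg _
      have hJu : 0 ≤ u y - (u y)^2 := by nlinarith [(hu01 y).1, (hu01 y).2]
      have step1 : Real.sqrt ((u y - (u y)^2)^2 + grad2 K u y)
          ≤ Real.sqrt (((p1+p2)/2)^2 + ((q1+q2)/2)^2) := by
        apply Real.sqrt_le_sqrt
        apply add_le_add
        · have h1 : u y - (u y)^2 ≤ (p1+p2)/2 := htp
          exact pow_le_pow_left₀ hJu h1 2
        · have h2 : Real.sqrt (grad2 K u y) ≤ (q1+q2)/2 := hgradu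
          have := Real.sq_sqrt (grad2_nonneg K u y)
          nlinarith [Real.sqrt_nonneg (grad2 K u y)]
      have step2 : Real.sqrt (((p1+p2)/2)^2 + ((q1+q2)/2)^2)
          ≤ (Real.sqrt (p1^2+q1^2) + Real.sqrt (p2^2+q2^2))/2 :=
        minkowski2 hp10 hq10 hp20 hq20
      have hpq1 : p1^2 + q1^2 = (a - a^2)^2 + grad2 (insert j K) f y := by
        rw [hp1, hq1, Real.sq_sqrt (by positivity), Real.sq_sqrt (grad2_nonneg _ _ _), hga]
        ring
      have hpq2 : p2^2 + q2^2 = (b - b^2)^2 + grad2 (insert j K) f (flips {j} y) := by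
        rw [hp2, hq2, Real.sq_sqrt (by positivity), Real.sq_sqrt (grad2_nonneg _ _ _), hgb]
        ring
      calc Real.sqrt ((u y - (u y)^2)^2 + grad2 K u y)
          ≤ Real.sqrt (((p1+p2)/2)^2 + ((q1+q2)/2)^2) := step1
        _ ≤ (Real.sqrt (p1^2+q1^2) + Real.sqrt (p2^2+q2^2))/2 := step2
        _ = (R y + R (flips {j} y))/2 := by rw [hR]; rw [hpq1, hpq2]
    -- assemble
    rw [havg]
    calc EK K u x - (EK K u x)^2
        ≤ EK K (fun y => Real.sqrt ((u y - (u y)^2)^2 + grad2 K u y)) x := ih u hu01 x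
      _ ≤ EK K (fun y => (R y + R (flips {j} y))/2) x := EK_mono hpoint K x
      _ = EK (insert j K) R x := (EK_insert' j K hj R x).symm

def sensK (K : Finset (Fin n)) (f : (Fin n → Bool) → Bool) (x : Fin n → Bool) : ℕ :=
  (K.filter (fun i => f (flips {i} x) ≠ f x)).card

noncomputable def ind (f : (Fin n → Bool) → Bool) : (Fin n → Bool) → ℝ :=
  fun x => if f x then 1 else 0

lemma ind01 (f : (Fin n → Bool) → Bool) (y : Fin n → Bool) : 0 ≤ ind f y ∧ ind f y ≤ 1 := by
  unfold ind; rcases Bool.eq_false_or_eq_true (f y) with h | h <;> simp [h]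

lemma ind_J (f : (Fin n → Bool) → Bool) (y : Fin n → Bool) : ind f y - (ind f y)^2 = 0 := by
  unfold ind; rcases Bool.eq_false_or_eq_true (f y) with h | h <;> simp [h]

lemma ind_sq (f : (Fin n → Bool) → Bool) (y : Fin n → Bool) : ind f y * ind f y = ind f y := by
  unfold ind; rcases Bool.eq_false_or_eq_true (f y) with h | h <;> simp [h]

lemma grad2_ind (K : Finset (Fin n)) (f : (Fin n → Bool) → Bool) (y : Fin n → Bool) :
    grad2 K (ind f) y = (sensK K f y : ℝ)/4 := by
  unfold grad2 sensK
  have h1 : ∀ i ∈ K, ((ind f y - ind f (flips {i} y))/2)^2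
      = if f (flips {i} y) ≠ f y then (1:ℝ)/4 else 0 := by
    intro i _
    rcases Bool.eq_false_or_eq_true (f y) with h | h <;>
      rcases Bool.eq_false_or_eq_true (f (flips {i} y)) with h' | h' <;>
      simp [ind, h, h'] <;> norm_num
  rw [Finset.sum_congr rfl h1, Finset.sum_ite, Finset.sum_const_zero, add_zero,
    Finset.sum_const]
  simp [div_eq_mul_inv, mul_comm]

lemma sqrt_grad2_ind (K : Finset (Fin n)) (f : (Fin n → Bool) → Bool) (y : Fin n → Bool) :
    Real.sqrt ((ind f y - (ind f y)^2)^2 + grad2 K (ind f) y)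
      = Real.sqrt ((sensK K f y : ℝ))/2 := by
  rw [ind_J, grad2_ind]
  have h4 : ((sensK K f y : ℝ))/4 = (Real.sqrt ((sensK K f y : ℝ))/2)^2 := by
    rw [div_pow, Real.sq_sqrt (by positivity)]
    norm_num
  rw [zero_pow (by norm_num), zero_add, h4, Real.sqrt_sq (by positivity)]

-- the key inequality for a fixed set K of live coordinates
lemma main_K (K : Finset (Fin n)) (f : (Fin n → Bool) → Bool) :
    ∑ S ∈ Finset.univ.filter (fun S : Finset (Fin n) => ¬ S ∩ K = ∅), (fhat (ind f) S)^2
      ≤ (∑ x, Real.sqrt ((sensK K f x : ℝ)))/2^n/2 := by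
  classical
  have hbob : ∀ x, EK K (ind f) x - (EK K (ind f) x)^2
      ≤ EK K (fun y => Real.sqrt ((sensK K f y : ℝ))/2) x := by
    intro x
    have := bobkov K (ind f) (ind01 f) x
    calc EK K (ind f) x - (EK K (ind f) x)^2
        ≤ EK K (fun y => Real.sqrt ((ind f y - (ind f y)^2)^2 + grad2 K (ind f) y)) x := this
      _ = EK K (fun y => Real.sqrt ((sensK K f y : ℝ))/2) x := by
          unfold EK
          congr 1
          exact Finset.sum_congr rfl (fun T _ => sqrt_grad2_ind K f _)
  -- sum the Bobkov inequality over x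
  have hsum : ∑ x, (EK K (ind f) x - (EK K (ind f) x)^2)
      ≤ ∑ x, Real.sqrt ((sensK K f x : ℝ))/2 := by
    calc ∑ x, (EK K (ind f) x - (EK K (ind f) x)^2)
        ≤ ∑ x, EK K (fun y => Real.sqrt ((sensK K f y : ℝ))/2) x :=
          Finset.sum_le_sum (fun x _ => hbob x)
      _ = ∑ x, Real.sqrt ((sensK K f x : ℝ))/2 := sum_EK K _
  -- identify the left side
  have hfour : ∑ x, (EK K (ind f) x - (EK K (ind f) x)^2)
      = (∑ S ∈ Finset.univ.filter (fun S : Finset (Fin n) => ¬ S ∩ K = ∅), (fhat (ind f) S)^2) * 2^n := by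
    rw [Finset.sum_sub_distrib]
    have h1 : ∑ x, EK K (ind f) x = (∑ S : Finset (Fin n), (fhat (ind f) S)^2) * 2^n := by
      rw [sum_EK]
      have hp := parseval (ind f) (ind f)
      have h2 : ∑ x, ind f x * ind f x = ∑ x, ind f x :=
        Finset.sum_congr rfl (fun x _ => ind_sq f x)
      have h3 : ∀ S, fhat (ind f) S * fhat (ind f) S = (fhat (ind f) S)^2 := by
        intro S; ring
      rw [h2] at hp
      rw [← Fintype.sum_congr _ _ h3, hp]
      field_simp
    have h2 : ∑ x, (EK K (ind f) x)^2
        = (∑ S ∈ Finset.univ.filter (fun S : Finset (Fin n) => S ∩ K = ∅), (fhat (ind f) S)^2) * 2^n := by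
      have hq := sum_sq_EK K (ind f)
      have h3 : ∀ x, EK K (ind f) x * EK K (ind f) x = (EK K (ind f) x)^2 := fun x => by ring
      have h4 : ∀ S ∈ Finset.univ.filter (fun S : Finset (Fin n) => S ∩ K = ∅),
          fhat (ind f) S * fhat (ind f) S = (fhat (ind f) S)^2 := fun S _ => by ring
      rw [Fintype.sum_congr _ _ h3] at hq
      rw [Finset.sum_congr rfl h4] at hq
      rw [← hq]
      field_simp
    rw [h1, h2, ← Finset.sum_filter_add_sum_filter_not Finset.univ
      (fun S : Finset (Fin n) => S ∩ K = ∅) (fun S => (fhat (ind f) S)^2)]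
    ring
  rw [hfour] at hsum
  rw [div_div, le_div_iff₀ (by positivity : (0:ℝ) < 2^n * 2)]
  calc (∑ S ∈ Finset.univ.filter (fun S : Finset (Fin n) => ¬ S ∩ K = ∅), (fhat (ind f) S)^2) * (2^n * 2)
      = ((∑ S ∈ Finset.univ.filter (fun S : Finset (Fin n) => ¬ S ∩ K = ∅), (fhat (ind f) S)^2) * 2^n) * 2 := by
        ring
    _ ≤ (∑ x, Real.sqrt ((sensK K f x : ℝ))/2) * 2 := by linarith
    _ = ∑ x, Real.sqrt ((sensK K f x : ℝ)) := by
        rw [← Finset.sum_div]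
        field_simp

lemma jensen_sqrt {ι : Type*} (s : Finset ι) (w v : ι → ℝ) (hw : ∀ i ∈ s, 0 ≤ w i)
    (hv : ∀ i ∈ s, 0 ≤ v i) (hw1 : ∑ i ∈ s, w i = 1) :
    ∑ i ∈ s, w i * Real.sqrt (v i) ≤ Real.sqrt (∑ i ∈ s, w i * v i) := by
  have hcs := Finset.sum_mul_sq_le_sq_mul_sq s (fun i => Real.sqrt (w i))
    (fun i => Real.sqrt (w i) * Real.sqrt (v i))
  have h1 : ∀ i ∈ s, Real.sqrt (w i) * (Real.sqrt (w i) * Real.sqrt (v i))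
      = w i * Real.sqrt (v i) := by
    intro i hi
    rw [← mul_assoc, Real.mul_self_sqrt (hw i hi)]
  have h2 : ∀ i ∈ s, (Real.sqrt (w i))^2 = w i := fun i hi => Real.sq_sqrt (hw i hi)
  have h3 : ∀ i ∈ s, (Real.sqrt (w i) * Real.sqrt (v i))^2 = w i * v i := by
    intro i hi
    rw [mul_pow, Real.sq_sqrt (hw i hi), Real.sq_sqrt (hv i hi)]
  rw [Finset.sum_congr rfl h1, Finset.sum_congr rfl h2, Finset.sum_congr rfl h3, hw1, one_mul] at hcs
  have h4 : 0 ≤ ∑ i ∈ s, w i * Real.sqrt (v i) :=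
    Finset.sum_nonneg (fun i hi => mul_nonneg (hw i hi) (Real.sqrt_nonneg _))
  have h5 : 0 ≤ ∑ i ∈ s, w i * v i :=
    Finset.sum_nonneg (fun i hi => mul_nonneg (hw i hi) (hv i hi))
  exact (Real.le_sqrt h4 h5).2 hcs

lemma wsum_avoid (A : Finset (Fin n)) (p q : ℝ) (hp : 0 ≤ p) (hq : 0 ≤ q) :
    ∑ K ∈ (Finset.univ : Finset (Fin n)).powerset,
      (if A ∩ K = ∅ then (1:ℝ) else 0) * (p^K.card * q^(n - K.card))
      = q^A.card * (p+q)^(n - A.card) := by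
  classical
  have hterm : ∀ K ∈ (Finset.univ : Finset (Fin n)).powerset,
      (if A ∩ K = ∅ then (1:ℝ) else 0) * (p^K.card * q^(n - K.card))
      = (∏ i ∈ K, (if i ∈ A then (0:ℝ) else p)) * ∏ i ∈ (Finset.univ : Finset (Fin n)) \ K, q := by
    intro K hK
    have hcard : ((Finset.univ : Finset (Fin n)) \ K).card = n - K.card := by
      rw [Finset.card_sdiff_of_subset (Finset.subset_univ K), Finset.card_univ, Fintype.card_fin]
    rw [Finset.prod_const, hcard]
    by_cases hAK : A ∩ K = ∅
    · rw [if_pos hAK]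
      have : ∀ i ∈ K, (if i ∈ A then (0:ℝ) else p) = p := by
        intro i hi
        have : i ∉ A := by
          intro hiA
          have : i ∈ A ∩ K := Finset.mem_inter.2 ⟨hiA, hi⟩
          simp [hAK] at this
        rw [if_neg this]
      rw [Finset.prod_congr rfl this, Finset.prod_const]
      ring
    · rw [if_neg hAK]
      obtain ⟨i, hi⟩ := Finset.nonempty_of_ne_empty hAK
      have hiA := (Finset.mem_inter.1 hi).1
      have hiK := (Finset.mem_inter.1 hi).2
      rw [Finset.prod_eq_zero hiK (by rw [if_pos hiA])]
      ring
  rw [Finset.sum_congr rfl hterm, ← Finset.prod_add]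
  rw [← Finset.prod_sdiff (Finset.subset_univ A)]
  have hA : ∀ i ∈ A, (if i ∈ A then (0:ℝ) else p) + q = q := by
    intro i hi; rw [if_pos hi, zero_add]
  have hAc : ∀ i ∈ (Finset.univ : Finset (Fin n)) \ A, (if i ∈ A then (0:ℝ) else p) + q = p + q := by
    intro i hi; rw [if_neg (Finset.mem_sdiff.1 hi).2]
  rw [Finset.prod_congr rfl hA, Finset.prod_congr rfl hAc, Finset.prod_const, Finset.prod_const]
  rw [Finset.card_sdiff_of_subset (Finset.subset_univ A), Finset.card_univ, Fintype.card_fin]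
  ring

lemma wsum_one (p q : ℝ) (hp : 0 ≤ p) (hq : 0 ≤ q) (hpq : p + q = 1) :
    ∑ K ∈ (Finset.univ : Finset (Fin n)).powerset, p^K.card * q^(n - K.card) = 1 := by
  have h := wsum_avoid (∅ : Finset (Fin n)) p q hp hq
  have h2 : ∀ K ∈ (Finset.univ : Finset (Fin n)).powerset,
      (if (∅ : Finset (Fin n)) ∩ K = ∅ then (1:ℝ) else 0) * (p^K.card * q^(n - K.card))
      = p^K.card * q^(n - K.card) := by
    intro K _
    rw [if_pos (by simp)]
    ring
  rw [Finset.sum_congr rfl h2] at h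
  rw [h, hpq]
  simp

lemma wsum_mem (i : Fin n) (p q : ℝ) (hp : 0 ≤ p) (hq : 0 ≤ q) (hpq : p + q = 1) :
    ∑ K ∈ (Finset.univ : Finset (Fin n)).powerset,
      (if i ∈ K then (1:ℝ) else 0) * (p^K.card * q^(n - K.card)) = p := by
  have h1 := wsum_avoid ({i} : Finset (Fin n)) p q hp hq
  have h2 : ∀ K ∈ (Finset.univ : Finset (Fin n)).powerset,
      (if i ∈ K then (1:ℝ) else 0) * (p^K.card * q^(n - K.card))
      = p^K.card * q^(n - K.card)
        - (if ({i} : Finset (Fin n)) ∩ K = ∅ then (1:ℝ) else 0) * (p^K.card * q^(n - K.card)) := by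
    intro K _
    have : ({i} : Finset (Fin n)) ∩ K = ∅ ↔ i ∉ K := by
      constructor
      · intro h hiK
        have : i ∈ ({i} : Finset (Fin n)) ∩ K := Finset.mem_inter.2 ⟨Finset.mem_singleton_self i, hiK⟩
        simp [h] at this
      · intro h
        ext a
        simp only [Finset.mem_inter, Finset.mem_singleton]
        constructor
        · rintro ⟨rfl, haK⟩; exact absurd haK h
        · intro ha; simp at ha
    by_cases hiK : i ∈ K
    · rw [if_pos hiK, if_neg (fun hc => (this.1 hc) hiK)]
      ring
    · rw [if_neg hiK, if_pos (by rw [this]; exact hiK)]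
      ring
  rw [Finset.sum_congr rfl h2, Finset.sum_sub_distrib, wsum_one p q hp hq hpq, h1]
  rw [hpq, one_pow, Finset.card_singleton, pow_one]
  linarith

lemma sensK_cast (K : Finset (Fin n)) (f : (Fin n → Bool) → Bool) (x : Fin n → Bool) :
    (sensK K f x : ℝ)
      = ∑ i : Fin n, (if i ∈ K ∧ f (flips {i} x) ≠ f x then (1:ℝ) else 0) := by
  unfold sensK
  have h1 : K.filter (fun i => f (flips {i} x) ≠ f x)
      = Finset.univ.filter (fun i => i ∈ K ∧ f (flips {i} x) ≠ f x) := by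
    ext i
    simp only [Finset.mem_filter, Finset.mem_univ, true_and]
  rw [h1, Finset.card_filter]
  push_cast
  rfl

lemma sensK_nonneg (K : Finset (Fin n)) (f : (Fin n → Bool) → Bool) (x : Fin n → Bool) :
    (0:ℝ) ≤ (sensK K f x : ℝ) := Nat.cast_nonneg _

lemma wsum_sensK (f : (Fin n → Bool) → Bool) (x : Fin n → Bool) (p q : ℝ)
    (hp : 0 ≤ p) (hq : 0 ≤ q) (hpq : p + q = 1) :
    ∑ K ∈ (Finset.univ : Finset (Fin n)).powerset,
        (p^K.card * q^(n - K.card)) * (sensK K f x : ℝ)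
      = p * (sensK Finset.univ f x : ℝ) := by
  classical
  have h1 : ∀ K ∈ (Finset.univ : Finset (Fin n)).powerset,
      (p^K.card * q^(n - K.card)) * (sensK K f x : ℝ)
      = ∑ i : Fin n, (if f (flips {i} x) ≠ f x then (1:ℝ) else 0)
          * ((if i ∈ K then (1:ℝ) else 0) * (p^K.card * q^(n - K.card))) := by
    intro K _
    rw [sensK_cast, Finset.mul_sum]
    apply Finset.sum_congr rfl
    intro i _
    by_cases h1 : i ∈ K <;> by_cases h2 : f (flips {i} x) ≠ f x <;>
      simp [h1, h2] <;> ring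
  rw [Finset.sum_congr rfl h1, Finset.sum_comm]
  have h2 : ∀ i : Fin n, ∑ K ∈ (Finset.univ : Finset (Fin n)).powerset,
      (if f (flips {i} x) ≠ f x then (1:ℝ) else 0)
        * ((if i ∈ K then (1:ℝ) else 0) * (p^K.card * q^(n - K.card)))
      = (if f (flips {i} x) ≠ f x then (1:ℝ) else 0) * p := by
    intro i
    rw [← Finset.mul_sum, wsum_mem i p q hp hq hpq]
  rw [Fintype.sum_congr _ _ h2]
  rw [← Finset.sum_mul, sensK_cast]
  have h3 : ∀ i : Fin n, (if i ∈ (Finset.univ : Finset (Fin n)) ∧ f (flips {i} x) ≠ f x then (1:ℝ) else 0)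
      = (if f (flips {i} x) ≠ f x then (1:ℝ) else 0) := by
    intro i
    simp
  rw [Fintype.sum_congr _ _ h3]
  ring

lemma flips_single (i : Fin n) (x : Fin n → Bool) :
    flips {i} x = Function.update x i (!x i) := by
  funext j
  by_cases h : j = i
  · subst h; simp [flips]
  · simp [flips, Function.update, h]

theorem main_ineq (f : (Fin n → Bool) → Bool) (d : ℕ) (hd : 2 ≤ d) :
    Real.sqrt d * (∑ S ∈ Finset.univ.filter
        (fun S : Finset (Fin n) => d ≤ S.card ∧ S.card ≤ 2*d), (fhat (ind f) S)^2)
      ≤ (∑ x, Real.sqrt ((sensK Finset.univ f x : ℝ)))/2^n := by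
  classical
  have hd2 : (2:ℝ) ≤ (d:ℝ) := by exact_mod_cast hd
  have hd0 : (0:ℝ) < (d:ℝ) := by linarith
  set p : ℝ := 1/(d:ℝ) with hp_def
  set q : ℝ := 1 - p with hq_def
  have hp : 0 ≤ p := by positivity
  have hp1 : p ≤ 1/2 := by
    rw [hp_def]
    rw [div_le_div_iff₀ hd0 (by norm_num)]
    linarith
  have hq : 0 ≤ q := by rw [hq_def]; linarith
  have hq1 : q ≤ 1 := by rw [hq_def]; linarith
  have hpq : p + q = 1 := by rw [hq_def]; ring
  have hdp : (d:ℝ) * p = 1 := by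
    rw [hp_def]; field_simp
  -- q^d ≤ 1/2
  have hqexp : q ≤ Real.exp (-p) := by
    have := Real.add_one_le_exp (-p)
    rw [hq_def]; linarith
  have hqd : q^d ≤ 1/2 := by
    calc q^d ≤ (Real.exp (-p))^d := pow_le_pow_left₀ hq hqexp d
      _ = Real.exp ((d:ℝ) * (-p)) := by rw [← Real.exp_nat_mul]
      _ = Real.exp (-1) := by
          congr 1
          rw [mul_neg, hdp]
      _ ≤ 1/2 := by
          rw [Real.exp_neg]
          have h2 : (2:ℝ) ≤ Real.exp 1 := by
            have := Real.add_one_le_exp 1; linarith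
          rw [inv_eq_one_div]
          rw [div_le_div_iff₀ (by positivity) (by norm_num)]
          linarith
  set w : Finset (Fin n) → ℝ := fun K => p^K.card * q^(n - K.card) with hw_def
  have hw0 : ∀ K, 0 ≤ w K := fun K => mul_nonneg (pow_nonneg hp _) (pow_nonneg hq _)
  set W := ∑ S ∈ Finset.univ.filter
      (fun S : Finset (Fin n) => d ≤ S.card ∧ S.card ≤ 2*d), (fhat (ind f) S)^2 with hW_def
  have hW0 : 0 ≤ W := Finset.sum_nonneg (fun S _ => sq_nonneg _)
  -- Step 3 : W/2 ≤ ∑_S (1 - q^|S|) fhat²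
  have hstep3 : W/2 ≤ ∑ S : Finset (Fin n), (1 - q^S.card) * (fhat (ind f) S)^2 := by
    have hterm : ∀ S ∈ Finset.univ.filter
        (fun S : Finset (Fin n) => d ≤ S.card ∧ S.card ≤ 2*d),
        (fhat (ind f) S)^2 / 2 ≤ (1 - q^S.card) * (fhat (ind f) S)^2 := by
      intro S hS
      have hdS : d ≤ S.card := ((Finset.mem_filter.1 hS).2).1
      have h1 : q^(S.card) ≤ q^d := pow_le_pow_of_le_one hq hq1 hdS
      have h2 : q^S.card ≤ 1/2 := le_trans h1 hqd
      nlinarith [sq_nonneg (fhat (ind f) S)]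
    calc W/2 = ∑ S ∈ Finset.univ.filter
          (fun S : Finset (Fin n) => d ≤ S.card ∧ S.card ≤ 2*d), (fhat (ind f) S)^2/2 := by
          rw [hW_def, Finset.sum_div]
      _ ≤ ∑ S ∈ Finset.univ.filter
          (fun S : Finset (Fin n) => d ≤ S.card ∧ S.card ≤ 2*d), (1 - q^S.card) * (fhat (ind f) S)^2 :=
          Finset.sum_le_sum hterm
      _ ≤ ∑ S : Finset (Fin n), (1 - q^S.card) * (fhat (ind f) S)^2 := by
          apply Finset.sum_le_sum_of_subset_of_nonneg (Finset.filter_subset _ _)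
          intro S _ _
          have : q^S.card ≤ 1 := pow_le_one₀ hq hq1
          nlinarith [sq_nonneg (fhat (ind f) S)]
  -- Step 4 : exchange
  have hstep4 : ∑ S : Finset (Fin n), (1 - q^S.card) * (fhat (ind f) S)^2
      = ∑ K ∈ (Finset.univ : Finset (Fin n)).powerset,
          w K * (∑ S ∈ Finset.univ.filter (fun S : Finset (Fin n) => ¬ S ∩ K = ∅),
            (fhat (ind f) S)^2) := by
    have h1 : ∀ K ∈ (Finset.univ : Finset (Fin n)).powerset,
        w K * (∑ S ∈ Finset.univ.filter (fun S : Finset (Fin n) => ¬ S ∩ K = ∅),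
          (fhat (ind f) S)^2)
        = ∑ S : Finset (Fin n),
            ((fhat (ind f) S)^2 * w K
              - (fhat (ind f) S)^2 * ((if S ∩ K = ∅ then (1:ℝ) else 0) * w K)) := by
      intro K _
      rw [Finset.sum_filter, Finset.mul_sum]
      apply Finset.sum_congr rfl
      intro S _
      by_cases hSK : S ∩ K = ∅ <;> simp [hSK] <;> ring
    rw [Finset.sum_congr rfl h1, Finset.sum_comm]
    apply Finset.sum_congr rfl
    intro S _
    rw [Finset.sum_sub_distrib, ← Finset.mul_sum, ← Finset.mul_sum]
    have h2 : ∑ K ∈ (Finset.univ : Finset (Fin n)).powerset,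
        (if S ∩ K = ∅ then (1:ℝ) else 0) * w K = q^S.card := by
      rw [hw_def]
      have := wsum_avoid S p q hp hq
      rw [this, hpq, one_pow, mul_one]
    rw [h2, hw_def]
    rw [wsum_one p q hp hq hpq]
    ring
  -- Step 5 : apply main_K
  have hstep5 : ∑ K ∈ (Finset.univ : Finset (Fin n)).powerset,
        w K * (∑ S ∈ Finset.univ.filter (fun S : Finset (Fin n) => ¬ S ∩ K = ∅),
          (fhat (ind f) S)^2)
      ≤ ∑ K ∈ (Finset.univ : Finset (Fin n)).powerset,
          w K * ((∑ x, Real.sqrt ((sensK K f x : ℝ)))/2^n/2) := by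
    apply Finset.sum_le_sum
    intro K _
    exact mul_le_mul_of_nonneg_left (main_K K f) (hw0 K)
  -- Step 6/7 : Jensen
  have hjensen : ∀ x : Fin n → Bool,
      ∑ K ∈ (Finset.univ : Finset (Fin n)).powerset, w K * Real.sqrt ((sensK K f x : ℝ))
        ≤ Real.sqrt p * Real.sqrt ((sensK Finset.univ f x : ℝ)) := by
    intro x
    calc ∑ K ∈ (Finset.univ : Finset (Fin n)).powerset, w K * Real.sqrt ((sensK K f x : ℝ))
        ≤ Real.sqrt (∑ K ∈ (Finset.univ : Finset (Fin n)).powerset, w K * (sensK K f x : ℝ)) := by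
          apply jensen_sqrt _ _ _ (fun K _ => hw0 K) (fun K _ => sensK_nonneg K f x)
          rw [hw_def]
          exact wsum_one p q hp hq hpq
      _ = Real.sqrt (p * (sensK Finset.univ f x : ℝ)) := by
          rw [hw_def, wsum_sensK f x p q hp hq hpq]
      _ = Real.sqrt p * Real.sqrt ((sensK Finset.univ f x : ℝ)) := Real.sqrt_mul hp _
  have hstep6 : ∑ K ∈ (Finset.univ : Finset (Fin n)).powerset,
        w K * ((∑ x, Real.sqrt ((sensK K f x : ℝ)))/2^n/2)
      ≤ Real.sqrt p * ((∑ x, Real.sqrt ((sensK Finset.univ f x : ℝ)))/2^n)/2 := by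
    have hswap : ∑ K ∈ (Finset.univ : Finset (Fin n)).powerset,
        w K * ((∑ x, Real.sqrt ((sensK K f x : ℝ)))/2^n/2)
        = (∑ x, ∑ K ∈ (Finset.univ : Finset (Fin n)).powerset,
            w K * Real.sqrt ((sensK K f x : ℝ)))/2^n/2 := by
      have h1 : ∀ K ∈ (Finset.univ : Finset (Fin n)).powerset,
          w K * ((∑ x, Real.sqrt ((sensK K f x : ℝ)))/2^n/2)
          = ∑ x, (w K * Real.sqrt ((sensK K f x : ℝ)))/2^n/2 := by
        intro K _
        rw [Finset.sum_div, Finset.sum_div, Finset.mul_sum]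
        apply Finset.sum_congr rfl
        intro x _
        ring
      rw [Finset.sum_congr rfl h1, Finset.sum_comm]
      rw [Finset.sum_div, Finset.sum_div]
      apply Finset.sum_congr rfl
      intro x _
      rw [← Finset.sum_div, ← Finset.sum_div]
    rw [hswap]
    have h2 : ∑ x, ∑ K ∈ (Finset.univ : Finset (Fin n)).powerset,
          w K * Real.sqrt ((sensK K f x : ℝ))
        ≤ ∑ x, Real.sqrt p * Real.sqrt ((sensK Finset.univ f x : ℝ)) :=
      Finset.sum_le_sum (fun x _ => hjensen x)
    have h3 : ∑ x, Real.sqrt p * Real.sqrt ((sensK Finset.univ f x : ℝ))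
        = Real.sqrt p * ∑ x, Real.sqrt ((sensK Finset.univ f x : ℝ)) := by
      rw [Finset.mul_sum]
    calc (∑ x, ∑ K ∈ (Finset.univ : Finset (Fin n)).powerset,
          w K * Real.sqrt ((sensK K f x : ℝ)))/2^n/2
        ≤ (∑ x, Real.sqrt p * Real.sqrt ((sensK Finset.univ f x : ℝ)))/2^n/2 := by
          apply div_le_div_of_nonneg_right _ (by norm_num : (0:ℝ) ≤ 2)
          apply div_le_div_of_nonneg_right h2 (by positivity)
      _ = Real.sqrt p * ((∑ x, Real.sqrt ((sensK Finset.univ f x : ℝ)))/2^n)/2 := by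
          rw [h3]
          ring
  -- put everything together
  set Sig := (∑ x, Real.sqrt ((sensK Finset.univ f x : ℝ)))/2^n with hS_def
  have hSig0 : 0 ≤ Sig := by
    rw [hS_def]
    positivity
  have hWS : W ≤ Real.sqrt p * Sig := by
    linarith [hstep3, hstep4.le, hstep4.ge, hstep5, hstep6]
  have hfinal : Real.sqrt d * W ≤ Sig := by
    calc Real.sqrt d * W ≤ Real.sqrt d * (Real.sqrt p * Sig) :=
          mul_le_mul_of_nonneg_left hWS (Real.sqrt_nonneg _)
      _ = (Real.sqrt d * Real.sqrt p) * Sig := by ring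
      _ = Real.sqrt ((d:ℝ) * p) * Sig := by rw [Real.sqrt_mul (le_of_lt hd0)]
      _ = Sig := by rw [hdp, Real.sqrt_one, one_mul]
  exact hfinal

end Tal

theorem talagrand_fourier_level_bound :
    ∃ c : ℝ, 0 < c ∧
      ∀ n : ℕ, 1 ≤ n → ∀ f : (Fin n → Bool) → Bool, ∀ d : ℕ, 2 ≤ d →
        c * Real.sqrt d *
            (∑ S ∈ Finset.univ.filter
                (fun S : Finset (Fin n) => d ≤ S.card ∧ S.card ≤ 2*d),
              ((∑ x : Fin n → Bool,
                  (if f x then (1 : ℝ) else 0) *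
                    ∏ i ∈ S, (if x i then (-1 : ℝ) else 1)) / 2^n)^2)
          ≤ (∑ x : Fin n → Bool,
              Real.sqrt ((Finset.univ.filter
                (fun i : Fin n => f (Function.update x i (!x i)) ≠ f x)).card)) / 2^n := by
  classical
  refine ⟨1/2, by norm_num, ?_⟩
  intro n _hn f d hd
  have h := Tal.main_ineq (n := n) f d hd
  have hW : (∑ S ∈ Finset.univ.filter
        (fun S : Finset (Fin n) => d ≤ S.card ∧ S.card ≤ 2*d),
      ((∑ x : Fin n → Bool,
          (if f x then (1 : ℝ) else 0) *
            ∏ i ∈ S, (if x i then (-1 : ℝ) else 1)) / 2^n)^2)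
      = ∑ S ∈ Finset.univ.filter
        (fun S : Finset (Fin n) => d ≤ S.card ∧ S.card ≤ 2*d), (Tal.fhat (Tal.ind f) S)^2 := rfl
  have hsens : ∀ x : Fin n → Bool,
      (Finset.univ.filter (fun i : Fin n => f (Function.update x i (!x i)) ≠ f x)).card
      = Tal.sensK Finset.univ f x := by
    intro x
    unfold Tal.sensK
    congr 1
    apply Finset.filter_congr
    intro i _
    rw [Tal.flips_single]
  have hsens' : (∑ x : Fin n → Bool,
      Real.sqrt ((Finset.univ.filter
        (fun i : Fin n => f (Function.update x i (!x i)) ≠ f x)).card))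
      = ∑ x : Fin n → Bool, Real.sqrt ((Tal.sensK Finset.univ f x : ℝ)) := by
    apply Finset.sum_congr rfl
    intro x _
    rw [hsens x]
  rw [hW, hsens']
  have hW0 : (0:ℝ) ≤ ∑ S ∈ Finset.univ.filter
      (fun S : Finset (Fin n) => d ≤ S.card ∧ S.card ≤ 2*d), (Tal.fhat (Tal.ind f) S)^2 :=
    Finset.sum_nonneg (fun S _ => sq_nonneg _)
  have hsd : (0:ℝ) ≤ Real.sqrt d := Real.sqrt_nonneg _
  nlinarith [h, mul_nonneg hsd hW0]
end

section
/- Let n, m ∈ ℕ with m ≥ 64n and n ≥ 1. Let f(x) = √x on [0,1], let (Be_m f)(x) = ∑_{k=0}^{m} f(k/m)·C(m,k)·x^k·(1−x)^{m−k} be its m-th Bernstein polynomial, and define the univariate polynomial B_m(x) = √n·(Be_m f)(x/n). Then: (1) 0 ≤ B_m(y) ≤ √y for all y ∈ [0, n]; (2) B_m is monotone nondecreasing on [0, n], i.e., B_m(x) ≤ B_m(y) for 0 ≤ x ≤ y ≤ n; (3) B_m(y) ≥ √y/2 for all y ∈ [1/4, n]; (4) B_m(y) ≥ y/2 for all y ∈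 [0, 1]. -/
open Finset

/-- The scaled Bernstein-polynomial proxy `B_m(x) = √n · (Be_m √·)(x/n)` for the
square-root function on `[0, n]`. -/
noncomputable def Bpoly (n m : ℕ) (x : ℝ) : ℝ :=
  Real.sqrt n * ∑ k ∈ Finset.range (m+1),
    Real.sqrt ((k : ℝ) / m) * (Nat.choose m k : ℝ) * (x/n)^k * (1 - x/n)^(m-k)

/-!
For `x ∈ [0,1]` the Bernstein weights are the law of `k/m` with `k ~ Bin(m, x)`: mean `x`,
variance `x(1-x)/m`. Hence Jensen's inequality for the concave `√` gives `Be_m √ ≤ √`, and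
integrating a quadratic minorant `q ≤ √` against the weights gives `Be_m √ (x) ≥ E q(k/m)`,
which only involves the mean and the variance. The minorant
`√t ≥ √x + (t-x)/(2√x) - (t-x)²/(2√x³)` yields `Be_m √ (x) ≥ √x - x(1-x)/(2m√x³) ≥ √x/2` once
`mx ≥ 1`; the minorant `√t ≥ ct - c³t²/4` with `c = √n` yields `B_m(y) ≥ y - (y² + yn/m)/4 ≥ y/2`
for `y ≤ 1`. Monotonicity holds because the derivative of `Be_m f` is `m` times the Bernstein
polynomial of the forward differences of `f`.
-/

open Polynomial Set

noncomputable def bernsteinApprox (m : ℕ) (f : ℝ → ℝ) : ℝ[X] :=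
  ∑ k ∈ range (m + 1), f (k / m) • bernsteinPolynomial ℝ m k

namespace bernsteinPolynomial

theorem eval_nonneg (m k : ℕ) {x : ℝ} (hx : x ∈ Icc (0 : ℝ) 1) :
    0 ≤ (bernsteinPolynomial ℝ m k).eval x := by
  simp only [bernsteinPolynomial, eval_mul, eval_pow, eval_sub, eval_one, eval_X, eval_natCast]
  exact mul_nonneg (mul_nonneg (Nat.cast_nonneg _) (pow_nonneg hx.1 _))
    (pow_nonneg (sub_nonneg.2 hx.2) _)

theorem sum_eval (m : ℕ) (x : ℝ) :
    ∑ k ∈ range (m + 1), (bernsteinPolynomial ℝ m k).eval x = 1 := by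
  simpa [eval_finsetSum] using congrArg (eval x) (sum ℝ m)

theorem sum_div_mul_eval {m : ℕ} (hm : m ≠ 0) (x : ℝ) :
    ∑ k ∈ range (m + 1), (k / m : ℝ) * (bernsteinPolynomial ℝ m k).eval x = x := by
  have h := congrArg (eval x) (sum_smul ℝ m)
  simp only [eval_finsetSum, eval_mul, eval_natCast, eval_X, nsmul_eq_mul] at h
  simp only [div_mul_eq_mul_div, ← sum_div, h]
  field_simp

theorem sum_sub_sq_mul_eval {m : ℕ} (hm : m ≠ 0) (x : ℝ) :
    ∑ k ∈ range (m + 1), (k / m - x : ℝ) ^ 2 * (bernsteinPolynomial ℝ m k).eval x =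
      x * (1 - x) / m := by
  have h := congrArg (eval x) (variance ℝ m)
  simp only [eval_finsetSum, eval_mul, eval_pow, eval_sub, eval_X, eval_natCast, eval_one,
    nsmul_eq_mul] at h
  have hm' : (m : ℝ) ≠ 0 := Nat.cast_ne_zero.2 hm
  calc _ = (∑ k ∈ range (m + 1), (m * x - k) ^ 2 * (bernsteinPolynomial ℝ m k).eval x) / m ^ 2 := by
        rw [sum_div]
        refine sum_congr rfl fun k _ => ?_
        field_simp
        ring
    _ = _ := by rw [h]; field_simp

end bernsteinPolynomial

section bernsteinApprox

variable {m : ℕ} {f : ℝ → ℝ} {x : ℝ}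

theorem natCast_div_mem_Icc_of_mem_range {k : ℕ} (hk : k ∈ range (m + 1)) :
    (k / m : ℝ) ∈ Icc (0 : ℝ) 1 :=
  ⟨by positivity, div_le_one_of_le₀ (Nat.cast_le.2 (mem_range_succ_iff.1 hk)) (Nat.cast_nonneg m)⟩

theorem eval_bernsteinApprox :
    (bernsteinApprox m f).eval x =
      ∑ k ∈ range (m + 1), f (k / m) * (bernsteinPolynomial ℝ m k).eval x := by
  simp [bernsteinApprox, eval_finsetSum]

theorem eval_bernsteinApprox_nonneg (hf : ∀ t ∈ Icc (0 : ℝ) 1, 0 ≤ f t)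
    (hx : x ∈ Icc (0 : ℝ) 1) : 0 ≤ (bernsteinApprox m f).eval x := by
  rw [eval_bernsteinApprox]
  exact sum_nonneg fun k hk => mul_nonneg (hf _ (natCast_div_mem_Icc_of_mem_range hk))
    (bernsteinPolynomial.eval_nonneg m k hx)

theorem eval_bernsteinApprox_le_of_concaveOn (hf : ConcaveOn ℝ (Icc 0 1) f) (hm : m ≠ 0)
    (hx : x ∈ Icc (0 : ℝ) 1) : (bernsteinApprox m f).eval x ≤ f x := by
  have h := hf.le_map_sum (t := range (m + 1)) (p := fun k : ℕ => (k / m : ℝ))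
    (fun k _ => bernsteinPolynomial.eval_nonneg m k hx) (bernsteinPolynomial.sum_eval m x)
    (fun k hk => natCast_div_mem_Icc_of_mem_range hk)
  simp only [smul_eq_mul, mul_comm ((bernsteinPolynomial ℝ m _).eval x)] at h
  rwa [bernsteinPolynomial.sum_div_mul_eval hm x, ← eval_bernsteinApprox] at h

theorem le_eval_bernsteinApprox_of_quadratic_le (hm : m ≠ 0) (hx : x ∈ Icc (0 : ℝ) 1)
    {a b c z : ℝ} (hf : ∀ t ∈ Icc (0 : ℝ) 1, a + b * (t - z) + c * (t - z) ^ 2 ≤ f t) :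
    a + b * (x - z) + c * ((x - z) ^ 2 + x * (1 - x) / m) ≤ (bernsteinApprox m f).eval x := by
  set w : ℕ → ℝ := fun k => (bernsteinPolynomial ℝ m k).eval x
  have hmass := bernsteinPolynomial.sum_eval m x
  have hmean := bernsteinPolynomial.sum_div_mul_eval hm x
  have hvar := bernsteinPolynomial.sum_sub_sq_mul_eval hm x
  have hsplit : ∀ k ∈ range (m + 1), (a + b * (k / m - z) + c * (k / m - z) ^ 2) * w k =
      (a + b * (x - z) + c * (x - z) ^ 2 - (b + 2 * c * (x - z)) * x) * w k +
        (b + 2 * c * (x - z)) * ((k / m) * w k) + c * ((k / m - x) ^ 2 * w k) :=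
    fun k _ => by ring
  rw [eval_bernsteinApprox]
  calc a + b * (x - z) + c * ((x - z) ^ 2 + x * (1 - x) / m)
      = ∑ k ∈ range (m + 1), (a + b * (k / m - z) + c * (k / m - z) ^ 2) * w k := by
        rw [sum_congr rfl hsplit, sum_add_distrib, sum_add_distrib, ← mul_sum, ← mul_sum,
          ← mul_sum, hmass, hmean, hvar]
        ring
    _ ≤ _ := sum_le_sum fun k hk =>
        mul_le_mul_of_nonneg_right (hf _ (natCast_div_mem_Icc_of_mem_range hk))
          (bernsteinPolynomial.eval_nonneg m k hx)

theorem derivative_bernsteinApprox :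
    derivative (bernsteinApprox m f) =
      (m : ℝ) • ∑ j ∈ range m, (f ((j + 1) / m) - f (j / m)) • bernsteinPolynomial ℝ (m - 1) j := by
  rcases m with _ | m
  · simp [bernsteinApprox, bernsteinPolynomial]
  have hshift :
      ∑ j ∈ range (m + 1), f ((j + 1 : ℕ) / (m + 1 : ℕ)) • bernsteinPolynomial ℝ m (j + 1) =
        ∑ j ∈ range (m + 1), f (j / (m + 1 : ℕ)) • bernsteinPolynomial ℝ m j -
          f 0 • bernsteinPolynomial ℝ m 0 := by
    have h := sum_range_succ' (fun j => f (j / (m + 1 : ℕ)) • bernsteinPolynomial ℝ m j) (m + 1)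
    rw [sum_range_succ, bernsteinPolynomial.eq_zero_of_lt ℝ (Nat.lt_succ_self m), smul_zero,
      add_zero] at h
    rw [h, Nat.cast_zero, zero_div, add_sub_cancel_right]
  simp only [bernsteinApprox, derivative_sum, derivative_smul]
  rw [sum_range_succ', bernsteinPolynomial.derivative_zero]
  simp only [bernsteinPolynomial.derivative_succ, add_tsub_cancel_right, neg_mul, ← nsmul_eq_mul,
    ← Nat.cast_smul_eq_nsmul ℝ, smul_comm _ ((m + 1 : ℕ) : ℝ), ← smul_sum, smul_sub,
    sum_sub_distrib, hshift]
  simp only [sub_smul, sum_sub_distrib, smul_sub, Nat.cast_zero, zero_div, Nat.cast_add,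
    Nat.cast_one]
  module

theorem monotoneOn_eval_bernsteinApprox (hf : MonotoneOn f (Icc 0 1)) :
    MonotoneOn (fun x => (bernsteinApprox m f).eval x) (Icc 0 1) := by
  refine monotoneOn_of_deriv_nonneg (convex_Icc 0 1) (Polynomial.continuousOn _)
    (Polynomial.differentiable _).differentiableOn fun x hx => ?_
  rw [interior_Icc] at hx
  rw [Polynomial.deriv, derivative_bernsteinApprox, eval_smul, eval_finsetSum, smul_eq_mul]
  refine mul_nonneg (Nat.cast_nonneg m) (sum_nonneg fun j hj => ?_)
  rw [eval_smul, smul_eq_mul]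
  refine mul_nonneg (sub_nonneg.2 (hf ?_ ?_ ?_))
    (bernsteinPolynomial.eval_nonneg _ _ (Ioo_subset_Icc_self hx))
  · exact natCast_div_mem_Icc_of_mem_range (mem_range_succ_iff.2 (mem_range.1 hj).le)
  · simpa using natCast_div_mem_Icc_of_mem_range (m := m) (k := j + 1) (by simpa using hj)
  · gcongr
    linarith

end bernsteinApprox

theorem Real.quadratic_minorant_le_sqrt {s t : ℝ} (hs : 0 < s) (ht : 0 ≤ t) :
    s + (t - s ^ 2) / (2 * s) - (t - s ^ 2) ^ 2 / (2 * s ^ 3) ≤ √t := by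
  obtain ⟨r, hr, rfl⟩ : ∃ r, 0 ≤ r ∧ r ^ 2 = t := ⟨√t, Real.sqrt_nonneg t, Real.sq_sqrt ht⟩
  rw [Real.sqrt_sq hr, ← sub_nonneg]
  have key : r * (r - s) ^ 2 * (r + 2 * s) / (2 * s ^ 3) =
      r - (s + (r ^ 2 - s ^ 2) / (2 * s) - (r ^ 2 - s ^ 2) ^ 2 / (2 * s ^ 3)) := by
    field_simp
    ring
  rw [← key]
  positivity

theorem Real.mul_sub_cube_mul_sq_le_sqrt {c t : ℝ} (hc : 0 ≤ c) (ht : 0 ≤ t) :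
    c * t - c ^ 3 / 4 * t ^ 2 ≤ √t := by
  obtain ⟨r, hr, rfl⟩ : ∃ r, 0 ≤ r ∧ r ^ 2 = t := ⟨√t, Real.sqrt_nonneg t, Real.sq_sqrt ht⟩
  rw [Real.sqrt_sq hr]
  have hv : 0 ≤ c * r := mul_nonneg hc hr
  -- with `v = c r`: `4 - 4v + v³ = v (v - 1)² + 2 (v - 5/4)² + 7/8`
  nlinarith [mul_nonneg hr (mul_nonneg hv (sq_nonneg (c * r - 1))),
    mul_nonneg hr (sq_nonneg (c * r - 5 / 4))]

theorem sqrt_div_two_le_eval_bernsteinApprox_sqrt {m : ℕ} {x : ℝ} (hx : x ≤ 1)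
    (hmx : 1 ≤ m * x) : √x / 2 ≤ (bernsteinApprox m Real.sqrt).eval x := by
  have hm : m ≠ 0 := by rintro rfl; norm_num at hmx
  have hx0 : 0 < x := pos_of_mul_pos_right (one_pos.trans_le hmx) (Nat.cast_nonneg m)
  set s := √x
  have hs : 0 < s := Real.sqrt_pos.2 hx0
  have hsx : s ^ 2 = x := Real.sq_sqrt hx0.le
  have h := le_eval_bernsteinApprox_of_quadratic_le hm ⟨hx0.le, hx⟩
    (f := Real.sqrt) (a := s) (b := 1 / (2 * s)) (c := -1 / (2 * s ^ 3)) (z := x) fun t ht => by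
      rw [← hsx]
      exact (Eq.le (by ring)).trans (Real.quadratic_minorant_le_sqrt hs ht.1)
  have hvar : x * (1 - x) / m ≤ s ^ 4 := by
    rw [div_le_iff₀ (by positivity), show s ^ 4 = x ^ 2 by rw [← hsx]; ring]
    nlinarith
  calc √x / 2 = s - s ^ 4 / (2 * s ^ 3) := by field_simp; ring
    _ ≤ s - x * (1 - x) / m / (2 * s ^ 3) := by gcongr
    _ = s + 1 / (2 * s) * (x - x) + -1 / (2 * s ^ 3) * ((x - x) ^ 2 + x * (1 - x) / m) := by ring
    _ ≤ _ := h

theorem div_mem_Icc_zero_one {y n : ℝ} (hy : 0 ≤ y) (hyn : y ≤ n) : y / n ∈ Icc (0 : ℝ) 1 :=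
  ⟨div_nonneg hy (hy.trans hyn), div_le_one_of_le₀ hyn (hy.trans hyn)⟩

theorem Bpoly_eq_sqrt_mul_eval_bernsteinApprox (n m : ℕ) (y : ℝ) :
    Bpoly n m y = √n * (bernsteinApprox m Real.sqrt).eval (y / n) := by
  simp only [Bpoly, eval_bernsteinApprox, bernsteinPolynomial, eval_mul, eval_pow, eval_sub,
    eval_one, eval_X, eval_natCast, mul_assoc]

theorem Bpoly_nonneg (n m : ℕ) {y : ℝ} (hy : 0 ≤ y) (hyn : y ≤ n) : 0 ≤ Bpoly n m y := by
  rw [Bpoly_eq_sqrt_mul_eval_bernsteinApprox]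
  exact mul_nonneg (Real.sqrt_nonneg n)
    (eval_bernsteinApprox_nonneg (fun t _ => Real.sqrt_nonneg t) (div_mem_Icc_zero_one hy hyn))

theorem Bpoly_le_sqrt {n m : ℕ} (hn : n ≠ 0) (hm : m ≠ 0) {y : ℝ} (hy : 0 ≤ y) (hyn : y ≤ n) :
    Bpoly n m y ≤ √y := by
  have hconc : ConcaveOn ℝ (Icc 0 1) Real.sqrt :=
    Real.strictConcaveOn_sqrt.concaveOn.subset Icc_subset_Ici_self (convex_Icc 0 1)
  calc Bpoly n m y ≤ √n * √(y / n) := by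
        rw [Bpoly_eq_sqrt_mul_eval_bernsteinApprox]
        gcongr
        exact eval_bernsteinApprox_le_of_concaveOn hconc hm (div_mem_Icc_zero_one hy hyn)
    _ = √y := by
        rw [← Real.sqrt_mul (Nat.cast_nonneg n), mul_div_cancel₀ _ (Nat.cast_ne_zero.2 hn)]

theorem Bpoly_monotoneOn (n m : ℕ) : MonotoneOn (Bpoly n m) (Icc 0 n) := by
  intro x hx y hy hxy
  rw [Bpoly_eq_sqrt_mul_eval_bernsteinApprox, Bpoly_eq_sqrt_mul_eval_bernsteinApprox]
  gcongr
  exact monotoneOn_eval_bernsteinApprox (fun a _ b _ hab => Real.sqrt_le_sqrt hab)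
    (div_mem_Icc_zero_one hx.1 hx.2) (div_mem_Icc_zero_one hy.1 hy.2)
    (div_le_div_of_nonneg_right hxy (Nat.cast_nonneg n))

theorem sqrt_div_two_le_Bpoly {n m : ℕ} (hn : n ≠ 0) (hmn : 4 * n ≤ m) {y : ℝ}
    (hy : 1 / 4 ≤ y) (hyn : y ≤ n) : √y / 2 ≤ Bpoly n m y := by
  have hn' : (0 : ℝ) < n := Nat.cast_pos.2 (Nat.pos_of_ne_zero hn)
  have hmx : 1 ≤ m * (y / n) := by
    have : (4 * n : ℝ) ≤ m := by exact_mod_cast hmn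
    rw [mul_div_assoc', le_div_iff₀ hn']
    nlinarith
  have h := sqrt_div_two_le_eval_bernsteinApprox_sqrt ((div_le_one₀ hn').2 hyn) hmx
  calc √y / 2 = √n * (√(y / n) / 2) := by
        rw [Real.sqrt_div' _ (Nat.cast_nonneg n)]
        field_simp
    _ ≤ Bpoly n m y := by rw [Bpoly_eq_sqrt_mul_eval_bernsteinApprox]; gcongr

theorem div_two_le_Bpoly {n m : ℕ} (hn : n ≠ 0) (hnm : n ≤ m) {y : ℝ} (hy : 0 ≤ y)
    (hy1 : y ≤ 1) : y / 2 ≤ Bpoly n m y := by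
  have hn' : (0 : ℝ) < n := Nat.cast_pos.2 (Nat.pos_of_ne_zero hn)
  have hnm' : (n : ℝ) ≤ m := by exact_mod_cast hnm
  have hm' : (0 : ℝ) < m := hn'.trans_le hnm'
  have hyn : y ≤ n := hy1.trans (by exact_mod_cast Nat.one_le_iff_ne_zero.2 hn)
  set x := y / n
  have hxI : x ∈ Icc (0 : ℝ) 1 := div_mem_Icc_zero_one hy hyn
  have hyx : y = n * x := (mul_div_cancel₀ y hn'.ne').symm
  have h := le_eval_bernsteinApprox_of_quadratic_le (Nat.cast_ne_zero.1 hm'.ne') hxI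
    (f := Real.sqrt) (a := 0) (b := √n) (c := -(√n ^ 3 / 4)) (z := 0) fun t ht => by
      simpa [neg_mul, ← sub_eq_add_neg] using
        Real.mul_sub_cube_mul_sq_le_sqrt (Real.sqrt_nonneg n) ht.1
  have hsq : √n ^ 2 = n := Real.sq_sqrt hn'.le
  have hvar : n * (x * (1 - x) / m) ≤ x := by
    rw [← mul_div_assoc, div_le_iff₀ hm']
    nlinarith [hxI.1, hxI.2]
  calc y / 2 ≤ n * x - n ^ 2 / 4 * (x ^ 2 + x * (1 - x) / m) := by nlinarith [hxI.1]
    _ = √n * (0 + √n * (x - 0) + -(√n ^ 3 / 4) * ((x - 0) ^ 2 + x * (1 - x) / m)) := by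
      linear_combination (-x) * hsq + ((x ^ 2 + x * (1 - x) / m) / 4) * congrArg (· ^ 2) hsq
    _ ≤ Bpoly n m y := by rw [Bpoly_eq_sqrt_mul_eval_bernsteinApprox]; gcongr

theorem bernstein_sqrt_proxy_properties
    (n m : ℕ) (hn : 1 ≤ n) (hm : 64 * n ≤ m) :
    (∀ y : ℝ, 0 ≤ y → y ≤ n → 0 ≤ Bpoly n m y ∧ Bpoly n m y ≤ Real.sqrt y) ∧
    (∀ x y : ℝ, 0 ≤ x → x ≤ y → y ≤ n → Bpoly n m x ≤ Bpoly n m y) ∧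
    (∀ y : ℝ, 1/4 ≤ y → y ≤ n → Real.sqrt y / 2 ≤ Bpoly n m y) ∧
    (∀ y : ℝ, 0 ≤ y → y ≤ 1 → y / 2 ≤ Bpoly n m y) := by
  have hn0 : n ≠ 0 := by omega
  refine ⟨fun y hy hyn => ⟨Bpoly_nonneg n m hy hyn, Bpoly_le_sqrt hn0 (by omega) hy hyn⟩,
    fun x y hx hxy hyn => Bpoly_monotoneOn n m ⟨hx, hxy.trans hyn⟩ ⟨hx.trans hxy, hyn⟩ hxy,
    fun y hy hyn => sqrt_div_two_le_Bpoly hn0 (by omega) hy hyn,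
    fun y hy hy1 => div_two_le_Bpoly hn0 (by omega) hy hy1⟩
end

section
/- There exists a constant C ≥ 1 such that the following holds for every real ε ∈ (0, 1/2] and every simple graph G on a finite vertex set V with |V| = n ≥ 2: if there is an assignment of a unit vector u_i in a real inner product space to each vertex i ∈ V such that ⟨u_i, u_j⟩ ≤ −1 + ε for every edge {i,j} of G, then G contains an independent set of size at least n^{1−Cε}/C. -/
/-!
Project the vectors to the finite-dimensional span and draw a standard Gaussian vector `x`.
Keep the vertices `i` with `⟪u i, x⟫ ≥ t`, where `t² = 3 ε log n`. Each `⟪u i, x⟫` is a standard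
Gaussian, so a vertex is kept with probability at least `e^{-t²-1}/3 ≳ n^{-3ε}`. For an edge,
`‖u i + u j‖² ≤ 2ε`, so both endpoints are kept only if the Gaussian `⟪u i + u j, x⟫` of variance
at most `2ε` exceeds `2t`, which by the Chernoff bound has probability at most `e^{-t²/ε} = n^{-3}`.
Deleting one endpoint of every surviving edge leaves, in expectation, an independent set of size
at least `n^{1-3ε}/9 - 1/n`.
-/

open Finset MeasureTheory ProbabilityTheory Real
open scoped NNReal RealInnerProductSpace

namespace ProbabilityTheory

lemma hasSubgaussianMGF_id_gaussianReal {v c : ℝ≥0} (hvc : v ≤ c) :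
    HasSubgaussianMGF id c (gaussianReal 0 v) where
  integrable_exp_mul := integrable_exp_mul_gaussianReal
  mgf_le t := by
    simp only [mgf_id_gaussianReal, zero_mul, zero_add]
    gcongr

lemma gaussianPDFReal_le_gaussianReal_Ici {t : ℝ} (ht : 0 ≤ t) :
    gaussianPDFReal 0 1 (t + 1) ≤ (gaussianReal 0 1).real (Set.Ici t) := by
  have hpdf : ∀ x ∈ Set.Icc t (t + 1), gaussianPDFReal 0 1 (t + 1) ≤ gaussianPDFReal 0 1 x := by
    rintro x ⟨htx, hxt⟩
    simp only [gaussianPDFReal, sub_zero, NNReal.coe_one, mul_one]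
    gcongr
    nlinarith
  calc gaussianPDFReal 0 1 (t + 1)
      ≤ ∫ x in Set.Icc t (t + 1), gaussianPDFReal 0 1 x := by
        simpa using setIntegral_ge_of_const_le_real measurableSet_Icc (by simp) hpdf
          (integrable_gaussianPDFReal 0 1).integrableOn
    _ ≤ ∫ x in Set.Ici t, gaussianPDFReal 0 1 x :=
        setIntegral_mono_set (integrable_gaussianPDFReal 0 1).integrableOn
          (.of_forall fun _ => gaussianPDFReal_nonneg 0 1 _) (.of_forall Set.Icc_subset_Ici_self)
    _ = (gaussianReal 0 1).real (Set.Ici t) := by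
        rw [measureReal_def, gaussianReal_apply_eq_integral 0 one_ne_zero,
          ENNReal.toReal_ofReal (setIntegral_nonneg measurableSet_Ici
            fun _ _ => gaussianPDFReal_nonneg 0 1 _)]

lemma exp_neg_sq_sub_one_div_three_le_gaussianReal_Ici {t : ℝ} (ht : 0 ≤ t) :
    exp (-t ^ 2 - 1) / 3 ≤ (gaussianReal 0 1).real (Set.Ici t) := by
  refine le_trans ?_ (gaussianPDFReal_le_gaussianReal_Ici ht)
  have hsqrt : √(2 * π) ≤ 3 := by
    rw [sqrt_le_left (by norm_num)]
    nlinarith [pi_lt_d2]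
  calc exp (-t ^ 2 - 1) / 3 ≤ exp (-(t + 1) ^ 2 / 2) / √(2 * π) := by
        gcongr
        nlinarith [sq_nonneg (t - 1)]
    _ = gaussianPDFReal 0 1 (t + 1) := by simp [gaussianPDFReal, div_eq_inv_mul, mul_comm]

section StdGaussian

variable {E : Type*} [NormedAddCommGroup E] [InnerProductSpace ℝ E] [FiniteDimensional ℝ E]
  [MeasurableSpace E] [BorelSpace E]

lemma stdGaussian_map_inner (v : E) :
    (stdGaussian E).map (fun x => ⟪v, x⟫) = gaussianReal 0 (‖v‖₊ ^ 2) := by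
  have := IsGaussian.map_eq_gaussianReal (μ := stdGaussian E) (innerSL ℝ v)
  rw [integral_strongDual_stdGaussian, variance_dual_stdGaussian, innerSL_apply_norm] at this
  convert this using 2
  · ext; simp
  · ext; simp

lemma measureReal_stdGaussian_le_inner_le (v : E) {c : ℝ≥0} (hvc : ‖v‖ ^ 2 ≤ c) {s : ℝ}
    (hs : 0 ≤ s) : (stdGaussian E).real {x | s ≤ ⟪v, x⟫} ≤ exp (-s ^ 2 / (2 * c)) := by
  have hv : ‖v‖₊ ^ 2 ≤ c := by rw [← NNReal.coe_le_coe]; simpa using hvc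
  have h : HasSubgaussianMGF (id ∘ fun x => ⟪v, x⟫) c (stdGaussian E) :=
    .of_map (by fun_prop) (by rw [stdGaussian_map_inner]; exact hasSubgaussianMGF_id_gaussianReal hv)
  exact h.measure_ge_le hs

lemma measureReal_stdGaussian_le_inner_eq {v : E} (hv : ‖v‖ = 1) (t : ℝ) :
    (stdGaussian E).real {x | t ≤ ⟪v, x⟫} = (gaussianReal 0 1).real (Set.Ici t) := by
  have hv' : ‖v‖₊ ^ 2 = 1 := by ext; simp [hv]
  rw [← hv', ← stdGaussian_map_inner, map_measureReal_apply (by fun_prop) measurableSet_Ici]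
  rfl

/-- `v + w` is short, so the Chernoff bound applies to `⟪v + w, x⟫ ≥ 2t`. -/
lemma measureReal_stdGaussian_inter_le {v w : E} (hv : ‖v‖ = 1) (hw : ‖w‖ = 1) {ε : ℝ}
    (hε : 0 < ε) (hvw : ⟪v, w⟫ ≤ -1 + ε) {t : ℝ} (ht : 0 ≤ t) :
    (stdGaussian E).real ({x | t ≤ ⟪v, x⟫} ∩ {x | t ≤ ⟪w, x⟫}) ≤ exp (-t ^ 2 / ε) := by
  have hsum : ‖v + w‖ ^ 2 ≤ (2 * ε).toNNReal := by
    rw [norm_add_sq_real, hv, hw, Real.coe_toNNReal _ (by positivity)]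
    linarith
  calc (stdGaussian E).real ({x | t ≤ ⟪v, x⟫} ∩ {x | t ≤ ⟪w, x⟫})
      ≤ (stdGaussian E).real {x | 2 * t ≤ ⟪v + w, x⟫} := by
        refine measureReal_mono (fun x ⟨hxv, hxw⟩ => ?_)
        simp only [Set.mem_ofPred_eq, inner_add_left] at hxv hxw ⊢
        linarith
    _ ≤ exp (-(2 * t) ^ 2 / (2 * (2 * ε).toNNReal)) :=
        measureReal_stdGaussian_le_inner_le _ hsum (by positivity)
    _ = exp (-t ^ 2 / ε) := by
        rw [Real.coe_toNNReal _ (by positivity)]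
        congr 1
        field_simp

end StdGaussian

end ProbabilityTheory

namespace SimpleGraph

variable {V : Type*} [Fintype V] [DecidableEq V] (G : SimpleGraph V) [DecidableRel G.Adj]

/-- Alteration: discard every vertex of `S` that has a neighbour in `S`; each discarded vertex is
the first coordinate of an edge inside `S`. -/
lemma exists_isIndepSet_subset_card_le (S : Finset V) :
    ∃ I ⊆ S, G.IsIndepSet (I : Set V) ∧
      #S ≤ #I + #{p : V × V | G.Adj p.1 p.2 ∧ p.1 ∈ S ∧ p.2 ∈ S} := by
  refine ⟨{i ∈ S | ∀ j ∈ S, ¬ G.Adj i j}, filter_subset _ _, ?_, ?_⟩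
  · intro a ha b hb _
    exact (mem_filter.mp ha).2 b (mem_filter.mp hb).1
  · calc #S ≤ #({i ∈ S | ∀ j ∈ S, ¬ G.Adj i j} ∪
          ({p : V × V | G.Adj p.1 p.2 ∧ p.1 ∈ S ∧ p.2 ∈ S} : Finset _).image Prod.fst) := by
          refine card_le_card fun i hi => ?_
          by_cases h : ∀ j ∈ S, ¬ G.Adj i j
          · exact mem_union_left _ (mem_filter.mpr ⟨hi, h⟩)
          · push Not at h
            obtain ⟨j, hj, hij⟩ := h
            exact mem_union_right _ (mem_image.mpr ⟨(i, j), by simp [hij, hi, hj], rfl⟩)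
      _ ≤ _ := (card_union_le _ _).trans (add_le_add_right card_image_le _)

/-- The first moment method applied to the alteration of the random set `{i | ω ∈ A i}`. -/
theorem exists_isIndepSet_sum_measureReal_sub_le_card {Ω : Type*} [MeasurableSpace Ω]
    (μ : Measure Ω) [IsProbabilityMeasure μ] {A : V → Set Ω} (hA : ∀ i, MeasurableSet (A i)) :
    ∃ I : Finset V, G.IsIndepSet (I : Set V) ∧
      ∑ i, μ.real (A i) - ∑ p : V × V with G.Adj p.1 p.2, μ.real (A p.1 ∩ A p.2) ≤ #I := by
  set f : Ω → ℝ := fun ω => ∑ i, (A i).indicator (1 : Ω → ℝ) ω -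
    ∑ p : V × V with G.Adj p.1 p.2, (A p.1 ∩ A p.2).indicator (1 : Ω → ℝ) ω
  have hint_vert : ∀ i ∈ (univ : Finset V), Integrable ((A i).indicator (1 : Ω → ℝ)) μ :=
    fun i _ => (integrable_const (1 : ℝ)).indicator (hA i)
  have hint_pair : ∀ p ∈ ({p : V × V | G.Adj p.1 p.2} : Finset _),
      Integrable ((A p.1 ∩ A p.2).indicator (1 : Ω → ℝ)) μ :=
    fun p _ => (integrable_const (1 : ℝ)).indicator ((hA p.1).inter (hA p.2))
  have hf : Integrable f μ :=
    (integrable_finsetSum _ hint_vert).sub (integrable_finsetSum _ hint_pair)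
  have hmean : ∫ ω, f ω ∂μ =
      ∑ i, μ.real (A i) - ∑ p : V × V with G.Adj p.1 p.2, μ.real (A p.1 ∩ A p.2) := by
    rw [integral_sub (integrable_finsetSum _ hint_vert) (integrable_finsetSum _ hint_pair),
      integral_finsetSum _ hint_vert, integral_finsetSum _ hint_pair]
    simp only [integral_indicator_one (hA _), integral_indicator_one ((hA _).inter (hA _))]
  obtain ⟨ω, hω⟩ := exists_integral_le hf
  classical
  obtain ⟨I, -, hI, hcard⟩ := G.exists_isIndepSet_subset_card_le {i | ω ∈ A i}
  refine ⟨I, hI, ?_⟩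
  have hfω : f ω = #{i | ω ∈ A i} - #{p : V × V | G.Adj p.1 p.2 ∧ ω ∈ A p.1 ∧ ω ∈ A p.2} := by
    simp [f, Set.indicator_apply, sum_boole, filter_filter]
  have hcard' : (#{i | ω ∈ A i} : ℝ) ≤
      #I + #{p : V × V | G.Adj p.1 p.2 ∧ ω ∈ A p.1 ∧ ω ∈ A p.2} := by
    simpa using (Nat.cast_le (α := ℝ)).mpr hcard
  linarith

theorem exists_isIndepSet_of_unit_vectors_of_finiteDimensional {E : Type*}
    [NormedAddCommGroup E] [InnerProductSpace ℝ E] [FiniteDimensional ℝ E] [MeasurableSpace E]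
    [BorelSpace E] {u : V → E} (hu : ∀ i, ‖u i‖ = 1) {ε : ℝ} (hε : 0 < ε)
    (hadj : ∀ i j, G.Adj i j → ⟪u i, u j⟫ ≤ -1 + ε) {t : ℝ} (ht : 0 ≤ t) :
    ∃ I : Finset V, G.IsIndepSet (I : Set V) ∧
      Fintype.card V * (exp (-t ^ 2 - 1) / 3) - Fintype.card V ^ 2 * exp (-t ^ 2 / ε) ≤ #I := by
  set A : V → Set E := fun i => {x | t ≤ ⟪u i, x⟫}
  obtain ⟨I, hI, hcard⟩ := G.exists_isIndepSet_sum_measureReal_sub_le_card (stdGaussian E)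
    (A := A) fun i => measurableSet_le measurable_const (by fun_prop)
  refine ⟨I, hI, le_trans ?_ hcard⟩
  have hvert : Fintype.card V * (exp (-t ^ 2 - 1) / 3) ≤ ∑ i, (stdGaussian E).real (A i) := by
    rw [← nsmul_eq_mul, ← card_univ, ← sum_const]
    refine sum_le_sum fun i _ => ?_
    rw [measureReal_stdGaussian_le_inner_eq (hu i)]
    exact exp_neg_sq_sub_one_div_three_le_gaussianReal_Ici ht
  have hedge : ∑ p : V × V with G.Adj p.1 p.2, (stdGaussian E).real (A p.1 ∩ A p.2) ≤
      Fintype.card V ^ 2 * exp (-t ^ 2 / ε) := by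
    calc _ ≤ ∑ p : V × V with G.Adj p.1 p.2, exp (-t ^ 2 / ε) :=
          sum_le_sum fun p hp => measureReal_stdGaussian_inter_le (hu p.1) (hu p.2) hε
            (hadj p.1 p.2 (mem_filter.mp hp).2) ht
      _ ≤ ∑ _p : V × V, exp (-t ^ 2 / ε) :=
          sum_le_sum_of_subset_of_nonneg (filter_subset _ _) fun _ _ _ => (exp_pos _).le
      _ = Fintype.card V ^ 2 * exp (-t ^ 2 / ε) := by
          rw [sum_const, card_univ, Fintype.card_prod, nsmul_eq_mul]
          push_cast
          ring
  linarith

theorem exists_isIndepSet_of_unit_vectors {H : Type*} [NormedAddCommGroup H]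
    [InnerProductSpace ℝ H] {u : V → H} (hu : ∀ i, ‖u i‖ = 1) {ε : ℝ} (hε : 0 < ε)
    (hadj : ∀ i j, G.Adj i j → ⟪u i, u j⟫ ≤ -1 + ε) {t : ℝ} (ht : 0 ≤ t) :
    ∃ I : Finset V, G.IsIndepSet (I : Set V) ∧
      Fintype.card V * (exp (-t ^ 2 - 1) / 3) - Fintype.card V ^ 2 * exp (-t ^ 2 / ε) ≤ #I := by
  let W := Submodule.span ℝ (Set.range u)
  have : FiniteDimensional ℝ W := FiniteDimensional.span_of_finite ℝ (Set.finite_range u)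
  let : MeasurableSpace W := borel W
  have : BorelSpace W := ⟨rfl⟩
  let w : V → W := fun i => ⟨u i, Submodule.subset_span ⟨i, rfl⟩⟩
  exact exists_isIndepSet_of_unit_vectors_of_finiteDimensional G (u := w)
    (fun i => by simpa [w] using hu i) hε (fun i j hij => by simpa [w] using hadj i j hij) ht

end SimpleGraph

/-- The bound of `SimpleGraph.exists_isIndepSet_of_unit_vectors` at `t² = 3 ε log n`. -/
lemma rpow_div_nine_sub_le {n ε : ℝ} (hn : 2 ≤ n) (hε : 0 < ε) :
    n ^ (1 - 18 * ε) / 9 - 1 / 2 ≤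
      n * (exp (-(3 * ε * log n) - 1) / 3) - n ^ 2 * exp (-(3 * ε * log n) / ε) := by
  have hn0 : 0 < n := by linarith
  have hvert : n ^ (1 - 18 * ε) / 9 ≤ n * (exp (-(3 * ε * log n) - 1) / 3) := by
    have hexp : exp (-(3 * ε * log n) - 1) = n ^ (-(3 * ε)) * exp (-1) := by
      rw [rpow_def_of_pos hn0, ← exp_add]
      ring_nf
    have he : 1 / 3 ≤ exp (-1) := by
      rw [exp_neg, one_div]
      gcongr
      linarith [exp_one_lt_d9]
    calc n ^ (1 - 18 * ε) / 9 ≤ n ^ (1 - 3 * ε) * (1 / 3) / 3 := by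
          have := rpow_le_rpow_of_exponent_le (by linarith : 1 ≤ n)
            (by linarith : 1 - 18 * ε ≤ 1 - 3 * ε)
          linarith
      _ ≤ n ^ (1 - 3 * ε) * exp (-1) / 3 := by gcongr
      _ = n * (exp (-(3 * ε * log n) - 1) / 3) := by
          rw [hexp, sub_eq_add_neg, rpow_add hn0, rpow_one]
          ring
  have hedge : n ^ 2 * exp (-(3 * ε * log n) / ε) ≤ 1 / 2 := by
    have : exp (-(3 * ε * log n) / ε) = (n ^ 3)⁻¹ := by
      rw [show -(3 * ε * log n) / ε = -(3 * log n) by field_simp, exp_neg, ← Nat.cast_ofNat,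
        ← log_pow, exp_log (by positivity)]
    rw [this, show n ^ 2 * (n ^ 3)⁻¹ = n⁻¹ by field_simp, inv_le_comm₀ hn0 (by norm_num)]
    linarith
  linarith

theorem kms_rounding_large_independent_set :
    ∃ C : ℝ, 1 ≤ C ∧
      ∀ ε : ℝ, 0 < ε → ε ≤ 1/2 →
        ∀ (V : Type) [Fintype V] [DecidableEq V] (G : SimpleGraph V),
          2 ≤ Fintype.card V →
          ∀ (H : Type) [NormedAddCommGroup H] [InnerProductSpace ℝ H] (u : V → H),
            (∀ i : V, ‖u i‖ = 1) →
            (∀ i j : V, G.Adj i j → (inner ℝ (u i) (u j) : ℝ) ≤ -1 + ε) →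
            ∃ I : Finset V, (∀ a ∈ I, ∀ b ∈ I, ¬ G.Adj a b) ∧
              ((Fintype.card V : ℝ) ^ ((1 : ℝ) - C * ε)) / C ≤ (I.card : ℝ) := by
  refine ⟨18, by norm_num, fun ε hε _ V _ _ G hV H _ _ u hu hadj => ?_⟩
  classical
  set n := Fintype.card V
  have hn : (2 : ℝ) ≤ n := by exact_mod_cast hV
  by_cases hsmall : (n : ℝ) ^ (1 - 18 * ε) / 18 ≤ 1
  · obtain ⟨v⟩ : Nonempty V := Fintype.card_pos_iff.mp (by omega)
    exact ⟨{v}, by simp, by simpa using hsmall⟩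
  · obtain ⟨I, hI, hcard⟩ := G.exists_isIndepSet_of_unit_vectors hu hε hadj
      (sqrt_nonneg (3 * ε * log n))
    rw [sq_sqrt (by positivity)] at hcard
    refine ⟨I, fun a ha b hb hab => hI ha hb (G.ne_of_adj hab) hab, ?_⟩
    linarith [rpow_div_nine_sub_le hn hε]
end

section
/- There exists a constant C ≥ 1 such that for every n ≥ 1, every integer ℓ with ℓ ≥ C·√n, and every subset S ⊆ {0,1}ⁿ with |S| ≤ 2ⁿ/32, the Hamming ball-neighborhood Γ^ℓ(S) = {y ∈ {0,1}ⁿ : ∃ x ∈ S with dist(x,y) ≤ ℓ} satisfies |Γ^ℓ(S)| ≥ 3·|S|. -/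
open Finset

namespace NHC

variable {n : ℕ}

/-- Flip coordinate `i` of a Boolean vector. -/
def flip (x : Fin n → Bool) (i : Fin n) : Fin n → Bool :=
  Function.update x i (!(x i))

/-- Outer vertex boundary of a set in the hypercube. -/
def bd (A : Finset (Fin n → Bool)) : Finset (Fin n → Bool) :=
  univ.filter fun x => x ∉ A ∧ ∃ i, flip x i ∈ A

lemma mem_bd {A : Finset (Fin n → Bool)} {x : Fin n → Bool} :
    x ∈ bd A ↔ x ∉ A ∧ ∃ i, flip x i ∈ A := by
  simp [bd]

lemma bd_disjoint (A : Finset (Fin n → Bool)) : Disjoint A (bd A) := by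
  rw [Finset.disjoint_left]
  intro x hx hx'
  exact (mem_bd.1 hx').1 hx

lemma flip_flip (x : Fin n → Bool) (i : Fin n) : flip (flip x i) i = x := by
  unfold flip
  rw [Function.update_idem, Function.update_self, Bool.not_not, Function.update_eq_self]

lemma flip_ne (x : Fin n → Bool) (i : Fin n) : flip x i ≠ x := by
  intro h
  have h2 := congrFun h i
  rw [flip, Function.update_self] at h2
  simp at h2

lemma hammingDist_flip (x : Fin n → Bool) (i : Fin n) : hammingDist (flip x i) x ≤ 1 := by
  have hsub : ({j | flip x i j ≠ x j} : Finset (Fin n)) ⊆ {i} := by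
    intro j hj
    simp only [mem_filter, mem_univ, true_and] at hj
    rw [mem_singleton]
    by_contra hji
    exact hj (by rw [flip, Function.update_of_ne hji])
  calc hammingDist (flip x i) x = ({j | flip x i j ≠ x j} : Finset (Fin n)).card := rfl
    _ ≤ ({i} : Finset (Fin n)).card := card_le_card hsub
    _ = 1 := card_singleton i

section Sections

variable {m : ℕ}

/-- Non-dependent cons for Boolean vectors. -/
def bcons (b : Bool) (y : Fin m → Bool) : Fin (m + 1) → Bool :=
  fun j => Fin.cases b y j

@[simp] lemma bcons_zero (b : Bool) (y : Fin m → Bool) : bcons b y 0 = b := rfl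

@[simp] lemma bcons_succ (b : Bool) (y : Fin m → Bool) (i : Fin m) :
    bcons b y i.succ = y i := by
  simp [bcons]

lemma bcons_tail (x : Fin (m + 1) → Bool) : bcons (x 0) (Fin.tail x) = x := by
  funext j
  induction j using Fin.cases with
  | zero => rfl
  | succ k => simp [Fin.tail]

lemma bcons_injective (b : Bool) : Function.Injective (bcons (m := m) b) := by
  intro y z h
  funext i
  have := congrFun h i.succ
  simpa using this

/-- Section of a set in the `(m+1)`-cube given first coordinate `b`. -/
def Sec (b : Bool) (A : Finset (Fin (m + 1) → Bool)) : Finset (Fin m → Bool) :=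
  univ.filter fun y => bcons b y ∈ A

lemma mem_sec {b : Bool} {A : Finset (Fin (m + 1) → Bool)} {y : Fin m → Bool} :
    y ∈ Sec b A ↔ bcons b y ∈ A := by simp [Sec]

lemma update_bcons_succ (b : Bool) (y : Fin m → Bool) (i : Fin m) (v : Bool) :
    Function.update (bcons b y) i.succ v = bcons b (Function.update y i v) := by
  funext j
  induction j using Fin.cases with
  | zero =>
      rw [Function.update_of_ne (Fin.succ_ne_zero i).symm, bcons_zero, bcons_zero]
  | succ k =>
      by_cases hk : k = i
      · subst hk
        rw [Function.update_self, bcons_succ, Function.update_self]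
      · rw [Function.update_of_ne (fun h => hk (Fin.succ_injective _ h)), bcons_succ,
          bcons_succ, Function.update_of_ne hk]

lemma update_bcons_zero (b v : Bool) (y : Fin m → Bool) :
    Function.update (bcons b y) (0 : Fin (m + 1)) v = bcons v y := by
  funext j
  induction j using Fin.cases with
  | zero => rw [Function.update_self, bcons_zero]
  | succ k => rw [Function.update_of_ne (Fin.succ_ne_zero k), bcons_succ, bcons_succ]

lemma flip_bcons_succ (b : Bool) (y : Fin m → Bool) (i : Fin m) :
    flip (bcons b y) i.succ = bcons b (flip y i) := by
  unfold flip
  rw [bcons_succ, update_bcons_succ]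

lemma flip_bcons_zero (b : Bool) (y : Fin m → Bool) :
    flip (bcons b y) 0 = bcons (!b) y := by
  unfold flip
  rw [bcons_zero, update_bcons_zero]

lemma cons_bd_subset (b : Bool) (A : Finset (Fin (m + 1) → Bool)) :
    (bd (Sec b A)).image (bcons b) ⊆ bd A := by
  intro x hx
  rw [mem_image] at hx
  obtain ⟨y, hy, rfl⟩ := hx
  rw [mem_bd] at hy ⊢
  obtain ⟨hy1, i, hy2⟩ := hy
  refine ⟨fun h => hy1 (mem_sec.2 h), ⟨i.succ, ?_⟩⟩
  rw [flip_bcons_succ]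
  exact mem_sec.1 hy2

lemma cons_diff_subset (b : Bool) (A : Finset (Fin (m + 1) → Bool)) :
    (Sec (!b) A \ Sec b A).image (bcons b) ⊆ bd A := by
  intro x hx
  rw [mem_image] at hx
  obtain ⟨y, hy, rfl⟩ := hx
  rw [mem_sdiff] at hy
  rw [mem_bd]
  refine ⟨fun h => hy.2 (mem_sec.2 h), ⟨0, ?_⟩⟩
  rw [flip_bcons_zero]
  exact mem_sec.1 hy.1

lemma sec_union (A : Finset (Fin (m + 1) → Bool)) :
    A = (Sec false A).image (bcons false) ∪ (Sec true A).image (bcons true) := by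
  ext x
  constructor
  · intro hx
    rw [mem_union, mem_image, mem_image]
    cases h0 : x 0 with
    | false =>
        left
        refine ⟨Fin.tail x, mem_sec.2 ?_, ?_⟩
        · rw [show bcons false (Fin.tail x) = x from by rw [← h0]; exact bcons_tail x]
          exact hx
        · rw [← h0]; exact bcons_tail x
    | true =>
        right
        refine ⟨Fin.tail x, mem_sec.2 ?_, ?_⟩
        · rw [show bcons true (Fin.tail x) = x from by rw [← h0]; exact bcons_tail x]
          exact hx
        · rw [← h0]; exact bcons_tail x
  · intro hx
    rw [mem_union, mem_image, mem_image] at hx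
    rcases hx with ⟨y, hy, rfl⟩ | ⟨y, hy, rfl⟩ <;> exact mem_sec.1 hy

lemma cons_image_disjoint (s t : Finset (Fin m → Bool)) :
    Disjoint (s.image (bcons false)) (t.image (bcons true)) := by
  rw [Finset.disjoint_left]
  intro x hx hx'
  rw [mem_image] at hx hx'
  obtain ⟨y, _, rfl⟩ := hx
  obtain ⟨z, _, hz⟩ := hx'
  have h0 := congrFun hz 0
  simp at h0

lemma card_sec (A : Finset (Fin (m + 1) → Bool)) :
    A.card = (Sec false A).card + (Sec true A).card := by
  conv_lhs => rw [sec_union A]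
  rw [card_union_of_disjoint (cons_image_disjoint _ _),
    card_image_of_injective _ (bcons_injective _),
    card_image_of_injective _ (bcons_injective _)]

lemma bd_sec_card (A : Finset (Fin (m + 1) → Bool)) :
    (bd (Sec false A)).card + (bd (Sec true A)).card ≤ (bd A).card := by
  have h := union_subset (cons_bd_subset false A) (cons_bd_subset true A)
  calc (bd (Sec false A)).card + (bd (Sec true A)).card
      = ((bd (Sec false A)).image (bcons false) ∪
          (bd (Sec true A)).image (bcons true)).card := by
        rw [card_union_of_disjoint (cons_image_disjoint _ _),
          card_image_of_injective _ (bcons_injective _),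
          card_image_of_injective _ (bcons_injective _)]
    _ ≤ (bd A).card := card_le_card h

lemma sec_diff_card (b : Bool) (A : Finset (Fin (m + 1) → Bool)) :
    (Sec (!b) A).card ≤ (bd A).card + (Sec b A).card := by
  have h1 : (Sec (!b) A \ Sec b A).card ≤ (bd A).card := by
    calc (Sec (!b) A \ Sec b A).card
        = ((Sec (!b) A \ Sec b A).image (bcons b)).card :=
          (card_image_of_injective _ (bcons_injective _)).symm
      _ ≤ (bd A).card := card_le_card (cons_diff_subset b A)
  calc (Sec (!b) A).card ≤ (Sec (!b) A \ Sec b A).card + (Sec b A).card := by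
        have := card_le_card_sdiff_add_card (s := Sec (!b) A) (t := Sec b A)
        omega
    _ ≤ (bd A).card + (Sec b A).card := by omega

end Sections

/-- The key real-arithmetic step for the induction. -/
lemma step_real (m : ℕ) (hm : (1 : ℝ) ≤ m) (N x0 x1 u0 u1 B : ℝ)
    (hN : 0 < N)
    (hx0 : 0 ≤ x0) (hx0' : x0 ≤ N) (hx1 : 0 ≤ x1) (hx1' : x1 ≤ N)
    (h0 : x0 * (N - x0) ≤ u0 * (Real.sqrt m * N))
    (h1 : x1 * (N - x1) ≤ u1 * (Real.sqrt m * N))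
    (hB1 : u0 + u1 ≤ B) (hB2 : x1 - x0 ≤ B) (hB3 : x0 - x1 ≤ B) :
    (x0 + x1) * (2 * N - (x0 + x1)) ≤ B * (Real.sqrt (m + 1) * (2 * N)) := by
  have hB0 : 0 ≤ B := by cases le_total x0 x1 with
    | inl h => linarith
    | inr h => linarith
  set G : ℝ := (x0 + x1) * (2 * N - (x0 + x1)) with hG
  have hG0 : 0 ≤ G := mul_nonneg (by linarith) (by linarith)
  have hGN : G ≤ N ^ 2 := by nlinarith [sq_nonneg (x0 + x1 - N)]
  have hm0 : (0 : ℝ) < m := by linarith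
  have hsm : 0 < Real.sqrt m := Real.sqrt_pos.2 hm0
  have hsm1 : 0 < Real.sqrt (m + 1) := Real.sqrt_pos.2 (by linarith)
  set T : ℝ := G / (2 * N * Real.sqrt (m + 1)) with hT
  by_cases hd : T ≤ |x1 - x0|
  · have habs : |x1 - x0| ≤ B := abs_le.2 ⟨by linarith, hB2⟩
    have hB : T ≤ B := le_trans hd habs
    have : G = T * (2 * N * Real.sqrt (m + 1)) := by
      rw [hT, div_mul_cancel₀]
      positivity
    calc G = T * (2 * N * Real.sqrt (m + 1)) := this
      _ ≤ B * (2 * N * Real.sqrt (m + 1)) := by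
          apply mul_le_mul_of_nonneg_right hB (by positivity)
      _ = B * (Real.sqrt (m + 1) * (2 * N)) := by ring
  · push_neg at hd
    have hd2 : (x1 - x0) ^ 2 ≤ T ^ 2 := by
      have h1 : |x1 - x0| ≤ T := le_of_lt hd
      nlinarith [abs_nonneg (x1 - x0), sq_abs (x1 - x0)]
    have hkey : G - (x1 - x0) ^ 2 ≤ 2 * B * (Real.sqrt m * N) := by
      have hsum : x0 * (N - x0) + x1 * (N - x1) ≤ (u0 + u1) * (Real.sqrt m * N) := by
        linarith
      have hident : G - (x1 - x0) ^ 2 = 2 * (x0 * (N - x0) + x1 * (N - x1)) := by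
        rw [hG]; ring
      have hBmul : (u0 + u1) * (Real.sqrt m * N) ≤ B * (Real.sqrt m * N) :=
        mul_le_mul_of_nonneg_right hB1 (by positivity)
      linarith
    have hT2 : T ^ 2 ≤ G / (4 * ((m:ℝ) + 1)) := by
      have hGG : G ^ 2 ≤ G * N ^ 2 := by nlinarith [mul_le_mul_of_nonneg_left hGN hG0]
      have hTsq : T ^ 2 = G ^ 2 / (4 * N ^ 2 * ((m:ℝ) + 1)) := by
        rw [hT, div_pow, mul_pow, mul_pow, Real.sq_sqrt (by linarith : (0:ℝ) ≤ (m:ℝ) + 1)]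
        ring_nf
      rw [hTsq, div_le_div_iff₀ (by positivity) (by positivity)]
      nlinarith [mul_le_mul_of_nonneg_right hGG (by linarith : (0:ℝ) ≤ (m:ℝ) + 1)]
    -- so G * (1 - 1/(4(m+1))) ≤ 2 B √m N
    have hmain : G * (1 - 1 / (4 * ((m : ℝ) + 1))) ≤ 2 * B * (Real.sqrt m * N) := by
      have : G - G / (4 * (m + 1)) ≤ G - T ^ 2 := by linarith
      have h2 : G - T ^ 2 ≤ G - (x1 - x0) ^ 2 := by linarith
      have h3 : G * (1 - 1 / (4 * ((m : ℝ) + 1))) = G - G / (4 * (m + 1)) := by ring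
      linarith
    -- √m ≤ (1 - 1/(4(m+1))) √(m+1)
    have hc : (0:ℝ) < 1 - 1 / (4 * ((m : ℝ) + 1)) := by
      have : 1 / (4 * ((m : ℝ) + 1)) ≤ 1 / 8 := by
        apply div_le_div_of_nonneg_left (by norm_num) (by norm_num) (by linarith)
      linarith
    have hsqrt : Real.sqrt m ≤ (1 - 1 / (4 * ((m : ℝ) + 1))) * Real.sqrt (m + 1) := by
      have hsq : (m : ℝ) ≤ ((1 - 1 / (4 * ((m : ℝ) + 1))) * Real.sqrt (m + 1)) ^ 2 := by
        rw [mul_pow, Real.sq_sqrt (by linarith : (0:ℝ) ≤ (m:ℝ) + 1)]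
        have hM1 : (0:ℝ) < (m:ℝ) + 1 := by linarith
        have hexp : (1 - 1 / (4 * ((m:ℝ) + 1))) ^ 2 * ((m:ℝ) + 1)
            = (m:ℝ) + 1/2 + 1 / (16 * ((m:ℝ) + 1)) := by
          field_simp
          ring
        rw [hexp]
        have hpos : (0:ℝ) ≤ 1 / (16 * ((m:ℝ) + 1)) := by positivity
        linarith
      calc Real.sqrt m ≤ Real.sqrt (((1 - 1 / (4 * ((m : ℝ) + 1))) * Real.sqrt (m + 1)) ^ 2) :=
            Real.sqrt_le_sqrt hsq
        _ = (1 - 1 / (4 * ((m : ℝ) + 1))) * Real.sqrt (m + 1) := by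
            rw [Real.sqrt_sq (by positivity)]
    -- combine
    have final : G * (1 - 1 / (4 * ((m : ℝ) + 1))) ≤
        2 * B * ((1 - 1 / (4 * ((m : ℝ) + 1))) * Real.sqrt (m + 1) * N) := by
      calc G * (1 - 1 / (4 * ((m : ℝ) + 1))) ≤ 2 * B * (Real.sqrt m * N) := hmain
        _ ≤ 2 * B * ((1 - 1 / (4 * ((m : ℝ) + 1))) * Real.sqrt (m + 1) * N) := by
            apply mul_le_mul_of_nonneg_left _ (by linarith)
            apply mul_le_mul_of_nonneg_right hsqrt (le_of_lt hN)
    have : G ≤ 2 * B * (Real.sqrt (m + 1) * N) := by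
      have h4 : G * (1 - 1 / (4 * ((m : ℝ) + 1))) ≤
          (2 * B * (Real.sqrt (m + 1) * N)) * (1 - 1 / (4 * ((m : ℝ) + 1))) := by
        calc G * (1 - 1 / (4 * ((m : ℝ) + 1))) ≤
            2 * B * ((1 - 1 / (4 * ((m : ℝ) + 1))) * Real.sqrt (m + 1) * N) := final
          _ = (2 * B * (Real.sqrt (m + 1) * N)) * (1 - 1 / (4 * ((m : ℝ) + 1))) := by ring
      exact le_of_mul_le_mul_right (by linarith [h4]) hc
    calc G ≤ 2 * B * (Real.sqrt (m + 1) * N) := this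
      _ = B * (Real.sqrt (m + 1) * (2 * N)) := by ring

lemma card_cube (k : ℕ) : Fintype.card (Fin k → Bool) = 2 ^ k := by
  simp [Fintype.card_fun]

/-- Main boundary lower bound: `|A| (2^n - |A|) ≤ |∂A| √n 2^n`. -/
lemma bd_card : ∀ (n : ℕ) (A : Finset (Fin n → Bool)),
    (A.card : ℝ) * (2 ^ n - A.card) ≤ (bd A).card * (Real.sqrt n * 2 ^ n) := by
  intro n
  induction n with
  | zero =>
      intro A
      have h := card_le_univ A
      rw [card_cube 0] at h
      interval_cases h' : A.card <;> norm_num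
  | succ m ih =>
      by_cases hm0 : m = 0
      · -- n = 1 base case
        subst hm0
        intro A
        have h := card_le_univ A
        rw [card_cube 1] at h
        have hbd : A.card = 1 → 1 ≤ (bd A).card := by
          intro h1
          obtain ⟨a, ha⟩ := card_eq_one.1 h1
          have hmem : flip a 0 ∈ bd A := by
            rw [mem_bd]
            constructor
            · rw [ha, mem_singleton]
              exact flip_ne a 0
            · exact ⟨0, by rw [flip_flip, ha]; exact mem_singleton_self a⟩
          calc 1 = ({flip a 0} : Finset _).card := (card_singleton _).symm
            _ ≤ (bd A).card := card_le_card (singleton_subset_iff.2 hmem)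
        have hc : ((0 + 1 : ℕ) : ℝ) = 1 := by norm_num
        interval_cases h' : A.card
        · norm_num
        · have h1 := hbd rfl
          have h2 : (1 : ℝ) ≤ ((bd A).card : ℝ) := by exact_mod_cast h1
          rw [hc, Real.sqrt_one]
          norm_num
          linarith
        · norm_num
      · intro A
        have hm1 : (1 : ℝ) ≤ (m : ℝ) := by exact_mod_cast Nat.one_le_iff_ne_zero.2 hm0
        have hcard : A.card = (Sec false A).card + (Sec true A).card := card_sec A
        have hub0 : (Sec false A).card ≤ 2 ^ m := by
          have := card_le_univ (Sec false A); rwa [card_cube m] at this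
        have hub1 : (Sec true A).card ≤ 2 ^ m := by
          have := card_le_univ (Sec true A); rwa [card_cube m] at this
        have hB1 : (bd (Sec false A)).card + (bd (Sec true A)).card ≤ (bd A).card :=
          bd_sec_card A
        have hB2 : (Sec true A).card ≤ (bd A).card + (Sec false A).card := by
          have := sec_diff_card false A
          simpa using this
        have hB3 : (Sec false A).card ≤ (bd A).card + (Sec true A).card := by
          have := sec_diff_card true A
          simpa using this
        have key := step_real m hm1 ((2:ℝ)^m) ((Sec false A).card) ((Sec true A).card)
          ((bd (Sec false A)).card) ((bd (Sec true A)).card) ((bd A).card)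
          (by positivity)
          (by positivity) (by exact_mod_cast hub0)
          (by positivity) (by exact_mod_cast hub1)
          (ih (Sec false A)) (ih (Sec true A))
          (by exact_mod_cast hB1)
          (by
            have h2 : ((Sec true A).card : ℝ) ≤ ((bd A).card : ℝ) + (Sec false A).card := by
              exact_mod_cast hB2
            linarith)
          (by
            have h3 : ((Sec false A).card : ℝ) ≤ ((bd A).card : ℝ) + (Sec true A).card := by
              exact_mod_cast hB3
            linarith)
        have hcast : (A.card : ℝ) = ((Sec false A).card : ℝ) + (Sec true A).card := by
          exact_mod_cast hcard
        have hpow : (2 : ℝ) ^ (m + 1) = 2 * 2 ^ m := by ring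
        have hcast2 : ((m + 1 : ℕ) : ℝ) = (m : ℝ) + 1 := by push_cast; ring
        rw [hcast, hpow, hcast2]
        exact key

/-- The ball-neighborhood of a set. -/
def nbhd (S : Finset (Fin n → Bool)) (j : ℕ) : Finset (Fin n → Bool) :=
  univ.filter fun y : Fin n → Bool => ∃ x ∈ S, hammingDist x y ≤ j

lemma mem_nbhd {S : Finset (Fin n → Bool)} {j : ℕ} {y : Fin n → Bool} :
    y ∈ nbhd S j ↔ ∃ x ∈ S, hammingDist x y ≤ j := by simp [nbhd]

lemma nbhd_mono (S : Finset (Fin n → Bool)) {j k : ℕ} (hjk : j ≤ k) :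
    nbhd S j ⊆ nbhd S k := by
  intro y hy
  rw [mem_nbhd] at hy ⊢
  obtain ⟨x, hx, hd⟩ := hy
  exact ⟨x, hx, hd.trans hjk⟩

lemma subset_nbhd (S : Finset (Fin n → Bool)) (j : ℕ) : S ⊆ nbhd S j := by
  intro x hx
  rw [mem_nbhd]
  exact ⟨x, hx, by simp⟩

lemma bd_nbhd_subset (S : Finset (Fin n → Bool)) (j : ℕ) :
    bd (nbhd S j) ⊆ nbhd S (j + 1) := by
  intro x hx
  rw [mem_bd] at hx
  obtain ⟨hx1, i, hx2⟩ := hx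
  rw [mem_nbhd] at hx2 ⊢
  obtain ⟨s, hs, hd⟩ := hx2
  refine ⟨s, hs, ?_⟩
  calc hammingDist s x ≤ hammingDist s (flip x i) + hammingDist (flip x i) x :=
        hammingDist_triangle _ _ _
    _ ≤ j + 1 := Nat.add_le_add hd (hammingDist_flip x i)

lemma nbhd_step (S : Finset (Fin n → Bool)) (j : ℕ) :
    (nbhd S j).card + (bd (nbhd S j)).card ≤ (nbhd S (j + 1)).card := by
  calc (nbhd S j).card + (bd (nbhd S j)).card = (nbhd S j ∪ bd (nbhd S j)).card :=
        (card_union_of_disjoint (bd_disjoint (nbhd S j))).symm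
    _ ≤ (nbhd S (j + 1)).card :=
        card_le_card (union_subset (nbhd_mono S (Nat.le_succ j)) (bd_nbhd_subset S j))

end NHC

open NHC

theorem noisy_hypercube_small_set_vertex_expansion :
    ∃ C : ℝ, 1 ≤ C ∧
      ∀ n : ℕ, 1 ≤ n → ∀ ℓ : ℕ, C * Real.sqrt n ≤ (ℓ : ℝ) →
        ∀ S : Finset (Fin n → Bool), (S.card : ℝ) ≤ 2^n / 32 →
          3 * S.card ≤
            (Finset.univ.filter (fun y : Fin n → Bool =>
              ∃ x ∈ S, hammingDist x y ≤ ℓ)).card := by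
  refine ⟨100, by norm_num, ?_⟩
  intro n hn ℓ hℓ S hS
  by_cases hS0 : S = ∅
  · simp [hS0]
  have hSpos : 0 < S.card := card_pos.2 (nonempty_iff_ne_empty.2 hS0)
  show 3 * S.card ≤ (nbhd S ℓ).card
  by_contra hcon
  push_neg at hcon
  have hsn1 : (1 : ℝ) ≤ Real.sqrt n := by
    rw [show (1:ℝ) = Real.sqrt 1 from (Real.sqrt_one).symm]
    exact Real.sqrt_le_sqrt (by exact_mod_cast hn)
  have hsn0 : (0 : ℝ) < Real.sqrt n := by linarith
  have h2n : (0 : ℝ) < 2 ^ n := by positivity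
  set t : ℝ := 29 / (32 * Real.sqrt n) with ht
  have ht0 : 0 < t := by positivity
  have hupper : ∀ j, j ≤ ℓ → ((nbhd S j).card : ℝ) < 3 * S.card := by
    intro j hj
    have h1 : (nbhd S j).card ≤ (nbhd S ℓ).card := card_le_card (nbhd_mono S hj)
    exact_mod_cast lt_of_le_of_lt h1 hcon
  have hgrow : ∀ j, j + 1 ≤ ℓ →
      ((nbhd S j).card : ℝ) * (1 + t) ≤ ((nbhd S (j+1)).card : ℝ) := by
    intro j hj
    have hup : ((nbhd S j).card : ℝ) < 3 * S.card := hupper j (by omega)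
    have hsize : ((nbhd S j).card : ℝ) ≤ 3 / 32 * 2 ^ n := by
      have h3 : (3 : ℝ) * S.card ≤ 3 * (2 ^ n / 32) := by linarith
      linarith
    have hbd := bd_card n (nbhd S j)
    have h29 : ((nbhd S j).card : ℝ) * (29 / 32 * 2 ^ n)
        ≤ ((bd (nbhd S j)).card : ℝ) * (Real.sqrt n * 2 ^ n) := by
      have hnn : (0:ℝ) ≤ ((nbhd S j).card : ℝ) := Nat.cast_nonneg _
      have hmul : ((nbhd S j).card : ℝ) * (29 / 32 * 2 ^ n)
          ≤ ((nbhd S j).card : ℝ) * (2 ^ n - (nbhd S j).card) := by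
        apply mul_le_mul_of_nonneg_left _ hnn
        linarith
      linarith
    have hbdlb : ((nbhd S j).card : ℝ) * t ≤ ((bd (nbhd S j)).card : ℝ) := by
      have hfin : ((nbhd S j).card : ℝ) * t * (Real.sqrt n * 2 ^ n)
          ≤ ((bd (nbhd S j)).card : ℝ) * (Real.sqrt n * 2 ^ n) := by
        have hsimp : ((nbhd S j).card : ℝ) * t * (Real.sqrt n * 2 ^ n)
            = ((nbhd S j).card : ℝ) * (29 / 32 * 2 ^ n) := by
          rw [ht]
          field_simp
        rw [hsimp]
        exact h29
      have hpos : (0:ℝ) < Real.sqrt n * 2 ^ n := by positivity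
      exact le_of_mul_le_mul_right hfin hpos
    have hcast : ((nbhd S j).card : ℝ) + ((bd (nbhd S j)).card : ℝ)
        ≤ ((nbhd S (j+1)).card : ℝ) := by exact_mod_cast nbhd_step S j
    nlinarith [hbdlb, hcast]
  have hiter : ∀ j, j ≤ ℓ → (S.card : ℝ) * (1 + t) ^ j ≤ ((nbhd S j).card : ℝ) := by
    intro j
    induction j with
    | zero =>
        intro _
        have h0 : (S.card:ℝ) ≤ ((nbhd S 0).card : ℝ) := by
          exact_mod_cast card_le_card (subset_nbhd S 0)
        simpa using h0
    | succ k ihk =>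
        intro hk
        have h1 := ihk (by omega)
        have h2 := hgrow k hk
        calc (S.card : ℝ) * (1 + t) ^ (k + 1) = ((S.card : ℝ) * (1 + t) ^ k) * (1 + t) := by ring
          _ ≤ ((nbhd S k).card : ℝ) * (1 + t) := by
              apply mul_le_mul_of_nonneg_right h1 (by linarith)
          _ ≤ ((nbhd S (k+1)).card : ℝ) := h2
  have hfinal := hiter ℓ (le_refl ℓ)
  have hbern : 1 + (ℓ : ℝ) * t ≤ (1 + t) ^ ℓ := by
    have hb := one_add_mul_le_pow (a := t) (by linarith) ℓ
    exact_mod_cast hb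
  have hlt : 100 * Real.sqrt n * t ≤ (ℓ : ℝ) * t :=
    mul_le_mul_of_nonneg_right hℓ (le_of_lt ht0)
  have hval : 100 * Real.sqrt n * t = 2900 / 32 := by
    rw [ht]
    field_simp
    ring
  have hSc : (1 : ℝ) ≤ S.card := by exact_mod_cast hSpos
  have hgl : ((nbhd S ℓ).card : ℝ) < 3 * S.card := hupper ℓ (le_refl ℓ)
  have hchain : (S.card : ℝ) * (1 + 2900/32) ≤ ((nbhd S ℓ).card : ℝ) := by
    calc (S.card : ℝ) * (1 + 2900/32) ≤ (S.card : ℝ) * (1 + (ℓ:ℝ) * t) := by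
          apply mul_le_mul_of_nonneg_left _ (by linarith)
          rw [← hval] at *
          linarith
      _ ≤ (S.card : ℝ) * (1 + t) ^ ℓ := by
          apply mul_le_mul_of_nonneg_left hbern (by linarith)
      _ ≤ ((nbhd S ℓ).card : ℝ) := hfinal
  nlinarith [hchain, hgl, hSc]
end
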